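/- arXiv:1405.0595 — 6 statements merged into one kernel-verified Lean document; each statement's English description precedes it below -/
import Mathlib

section
/- Let X₁, X₂ be independent random variables with P(Xᵢ > u) ∼ Lᵢ · u^{αᵢ} · exp(−u²/2) as u → ∞, where L₁, L₂ are positive constants and α₁, α₂ ∈ ℝ. Then P(X₁ + X₂ > u) ∼ L₁ L₂ √π · (u/2)^{α₁+α₂+1} · exp(−u²/4) as u → ∞. -/
/-!
Write `gᵢ(v) = Lᵢ v^αᵢ e^{-v²/2}` and condition on `X₁`:
`P(X₁ + X₂ > u) = ∫ P(X₂ > u - x) dP_{X₁}(x)`. For a fixed large `U`, the pieces `x ≤ U` and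
`x > u - U` are at most the tails at `u - U`, which are `o((u/2)^{α₁+α₂+1} e^{-u²/4})`. On
`(U, u - U]` both tails are within a factor `1 ± ε` of `gᵢ`, and a Stieltjes integration by parts
(Fubini) replaces the law of `X₁` by the density `-g₁'`, again up to a relative error `O(ε)`.
What is left is `∫ g₂(u - s) (-g₁'(s)) ds`, which Laplace's method evaluates: at `s = u/2 + t`
the integrand is `L₁ L₂ (u/2)^{α₁+α₂+1} e^{-u²/4}` times a kernel tending to `e^{-t²}`, and
dominated convergence gives the factor `∫ e^{-t²} dt = √π`.
-/

open MeasureTheory ProbabilityTheory Filter Set Asymptotics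
open scoped Topology

noncomputable def gaussLikeTail (L a x : ℝ) : ℝ := L * x ^ a * Real.exp (-x ^ 2 / 2)

lemma gaussLikeTail_pos {L a x : ℝ} (hL : 0 < L) (hx : 0 < x) : 0 < gaussLikeTail L a x := by
  unfold gaussLikeTail; positivity

lemma hasDerivAt_gaussLikeTail (L a : ℝ) {x : ℝ} (hx : 0 < x) :
    HasDerivAt (gaussLikeTail L a) ((a / x - x) * gaussLikeTail L a x) x := by
  have hpow : HasDerivAt (fun y : ℝ => L * y ^ a) (L * (a * x ^ (a - 1))) x :=
    (Real.hasDerivAt_rpow_const (Or.inl hx.ne')).const_mul L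
  have hexp : HasDerivAt (fun y : ℝ => Real.exp (-y ^ 2 / 2)) (Real.exp (-x ^ 2 / 2) * -x) x :=
    (Real.hasDerivAt_exp _).comp x
      (((hasDerivAt_pow 2 x).neg.div_const 2).congr_deriv (by ring))
  refine (hpow.mul hexp).congr_deriv ?_
  rw [gaussLikeTail, Real.rpow_sub hx, Real.rpow_one]
  field_simp
  ring

lemma continuousOn_gaussLikeTail (L a : ℝ) : ContinuousOn (gaussLikeTail L a) (Ioi 0) :=
  fun _ hx => (hasDerivAt_gaussLikeTail L a hx).continuousAt.continuousWithinAt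

section StieltjesParts

variable (ν : Measure ℝ) [IsFiniteMeasure ν] {a b : ℝ}

lemma setIntegral_Ioc_primitive_eq (hab : a ≤ b) {ψ : ℝ → ℝ} (hψ : ContinuousOn ψ (Icc a b)) :
    ∫ x in Ioc a b, (∫ s in a..x, ψ s) ∂ν = ∫ s in a..b, ψ s * ν.real (Ioc s b) := by
  obtain ⟨M, hM⟩ := isCompact_Icc.exists_bound_of_continuousOn hψ
  set f : ℝ → ℝ → ℝ := fun x s => {p : ℝ × ℝ | p.2 < p.1}.indicator (fun p => ψ p.2) (x, s)
  have hlt : MeasurableSet {p : ℝ × ℝ | p.2 < p.1} := measurableSet_lt measurable_snd measurable_fst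
  have hf : Integrable (Function.uncurry f)
      ((ν.restrict (Ioc a b)).prod (volume.restrict (Ioc a b))) := by
    refine Integrable.of_bound ?_ M ?_
    · rw [Measure.prod_restrict]
      refine AEStronglyMeasurable.indicator ?_ hlt
      exact (hψ.comp continuousOn_snd fun p hp => Ioc_subset_Icc_self hp.2).aestronglyMeasurable
        (measurableSet_Ioc.prod measurableSet_Ioc)
    · rw [Measure.prod_restrict]
      filter_upwards [ae_restrict_mem (measurableSet_Ioc.prod measurableSet_Ioc)] with p hp
      exact (norm_indicator_le_norm_self (fun p : ℝ × ℝ => ψ p.2) p).trans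
        (hM _ (Ioc_subset_Icc_self hp.2))
  have hinner : ∀ x ∈ Ioc a b, ∫ s in Ioc a b, f x s = ∫ s in a..x, ψ s := by
    intro x hx
    have hfx : f x = (Iio x).indicator ψ := by
      ext s; by_cases hs : s < x <;> simp [f, indicator, hs]
    have hset : Iio x ∩ Ioc a b = Ioo a x := by
      ext s; simp only [mem_inter_iff, mem_Iio, mem_Ioc, mem_Ioo]
      exact ⟨fun h => ⟨h.2.1, h.1⟩, fun h => ⟨h.2, h.1, h.2.le.trans hx.2⟩⟩
    rw [hfx, integral_indicator measurableSet_Iio, Measure.restrict_restrict measurableSet_Iio,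
      hset, intervalIntegral.integral_of_le hx.1.le, integral_Ioc_eq_integral_Ioo]
  have houter : ∀ s ∈ Ioc a b, ∫ x in Ioc a b, f x s ∂ν = ψ s * ν.real (Ioc s b) := by
    intro s hs
    have hfs : (fun x => f x s) = (Ioi s).indicator (fun _ => ψ s) := by
      ext x; by_cases hx : s < x <;> simp [f, indicator, hx]
    have hset : Ioi s ∩ Ioc a b = Ioc s b := by
      ext x; simp only [mem_inter_iff, mem_Ioi, mem_Ioc]
      exact ⟨fun h => ⟨h.1, h.2.2⟩, fun h => ⟨h.1, hs.1.trans h.1, h.2⟩⟩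
    rw [hfs, integral_indicator measurableSet_Ioi, Measure.restrict_restrict measurableSet_Ioi,
      hset, setIntegral_const, smul_eq_mul, mul_comm]
  calc ∫ x in Ioc a b, (∫ s in a..x, ψ s) ∂ν
      = ∫ x in Ioc a b, (∫ s in Ioc a b, f x s) ∂ν := setIntegral_congr_fun measurableSet_Ioc
        fun x hx => (hinner x hx).symm
    _ = ∫ s in Ioc a b, (∫ x in Ioc a b, f x s ∂ν) := integral_integral_swap hf
    _ = ∫ s in a..b, ψ s * ν.real (Ioc s b) := by
      rw [intervalIntegral.integral_of_le hab]
      exact setIntegral_congr_fun measurableSet_Ioc houter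

lemma setIntegral_Ioc_eq_of_hasDerivAt (hab : a ≤ b) {φ ψ : ℝ → ℝ}
    (hφ : ∀ x ∈ Icc a b, HasDerivAt φ (ψ x) x) (hψ : ContinuousOn ψ (Icc a b)) :
    ∫ x in Ioc a b, φ x ∂ν = φ a * ν.real (Ioc a b) + ∫ s in a..b, ψ s * ν.real (Ioc s b) := by
  have hψi : IntegrableOn ψ (uIcc a b) := by
    rw [uIcc_of_le hab]; exact hψ.integrableOn_Icc
  have hFTC : ∀ x ∈ Ioc a b, φ x = φ a + ∫ s in a..x, ψ s := by
    intro x hx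
    have hsub : uIcc a x ⊆ Icc a b := by
      rw [uIcc_of_le hx.1.le]; exact Icc_subset_Icc_right hx.2
    rw [intervalIntegral.integral_eq_sub_of_hasDerivAt (fun y hy => hφ y (hsub hy))
      ((hψi.mono_set (uIcc_subset_uIcc_left (mem_uIcc_of_le hx.1.le hx.2)))
        |>.intervalIntegrable)]
    ring
  have hG : IntegrableOn (fun x => ∫ s in a..x, ψ s) (Ioc a b) ν := by
    have := intervalIntegral.continuousOn_primitive_interval hψi
    rw [uIcc_of_le hab] at this
    exact this.integrableOn_Icc.mono_set Ioc_subset_Icc_self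
  rw [setIntegral_congr_fun measurableSet_Ioc hFTC, integral_add (integrable_const _) hG,
    setIntegral_Ioc_primitive_eq ν hab hψ, setIntegral_const, smul_eq_mul, mul_comm]

lemma integral_mul_eq_of_hasDerivAt (hab : a ≤ b) {φ ψ g h : ℝ → ℝ}
    (hφ : ∀ x ∈ Icc a b, HasDerivAt φ (ψ x) x) (hψ : ContinuousOn ψ (Icc a b))
    (hg : ∀ x ∈ Icc a b, HasDerivAt g (-h x) x) (hh : ContinuousOn h (Icc a b)) :
    ∫ s in a..b, φ s * h s = φ a * (g a - g b) + ∫ s in a..b, ψ s * (g s - g b) := by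
  rw [← uIcc_of_le hab] at hφ hψ hg hh
  have := intervalIntegral.integral_mul_deriv_eq_deriv_mul (v := fun s => g s - g b) hφ
    (fun x hx => (hg x hx).sub_const (g b)) hψ.intervalIntegrable hh.neg.intervalIntegrable
  simp only [mul_neg, intervalIntegral.integral_neg, sub_self, mul_zero, zero_sub] at this
  linarith

lemma abs_measureReal_Ioc_sub_le {g : ℝ → ℝ} {s ε : ℝ} (hsb : s ≤ b)
    (hs : |ν.real (Ioi s) - g s| ≤ ε * g s) (hb : |ν.real (Ioi b) - g b| ≤ ε * g b) :
    |ν.real (Ioc s b) - (g s - g b)| ≤ ε * (g s + g b) := by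
  rw [← Ioc_union_Ioi_eq_Ioi hsb,
    measureReal_union (Ioc_disjoint_Ioi le_rfl) measurableSet_Ioi] at hs
  rw [abs_le] at *
  constructor <;> linarith

/-- Both integrals are `φ a * T a + ∫ ψ * T` with `T s = ν (s, b]`, resp. `T s = g s - g b`, and
the two choices of `T` differ by at most `ε * (g s + g b)`. -/
lemma abs_setIntegral_sub_integral_le (hab : a ≤ b) {ε : ℝ} {φ ψ g h : ℝ → ℝ}
    (hφ : ∀ x ∈ Icc a b, HasDerivAt φ (ψ x) x) (hψ : ContinuousOn ψ (Icc a b))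
    (hψ₀ : ∀ x ∈ Icc a b, 0 ≤ ψ x) (hφa : 0 ≤ φ a)
    (hg : ∀ x ∈ Icc a b, HasDerivAt g (-h x) x) (hh : ContinuousOn h (Icc a b))
    (htail : ∀ s ∈ Icc a b, |ν.real (Ioi s) - g s| ≤ ε * g s) :
    |∫ x in Ioc a b, φ x ∂ν - ∫ s in a..b, φ s * h s| ≤
      ε * ((∫ s in a..b, φ s * h s) + 2 * φ b * g b) := by
  have huIcc : uIcc a b = Icc a b := uIcc_of_le hab
  have hgc : ContinuousOn g (Icc a b) := fun x hx => (hg x hx).continuousAt.continuousWithinAt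
  have hψi : IntervalIntegrable ψ volume a b := (huIcc ▸ hψ).intervalIntegrable
  have hψk : ∀ k : ℝ → ℝ, ContinuousOn k (Icc a b) →
      IntervalIntegrable (fun s => ψ s * k s) volume a b := fun k hk =>
    (huIcc ▸ hψ.mul hk).intervalIntegrable
  set T : ℝ → ℝ := fun s => ν.real (Ioc s b)
  have hT : IntervalIntegrable (fun s => ψ s * T s) volume a b :=
    (Antitone.intervalIntegrable fun s t hst => measureReal_mono (Ioc_subset_Ioc_left hst))
      |>.continuousOn_mul (huIcc ▸ hψ)
  have hD : ∀ s ∈ Icc a b, |T s - (g s - g b)| ≤ ε * (g s + g b) := fun s hs =>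
    abs_measureReal_Ioc_sub_le ν hs.2 (htail s hs) (htail b (right_mem_Icc.2 hab))
  have hparts := integral_mul_eq_of_hasDerivAt hab hφ hψ hg hh
  have hψint : ∫ s in a..b, ψ s = φ b - φ a :=
    intervalIntegral.integral_eq_sub_of_hasDerivAt (fun x hx => hφ x (huIcc ▸ hx)) hψi
  have hgb : IntervalIntegrable (fun s => ψ s * (g s - g b)) volume a b :=
    hψk (fun s => g s - g b) (hgc.sub continuousOn_const)
  have hdiff : ∫ x in Ioc a b, φ x ∂ν - ∫ s in a..b, φ s * h s =
      φ a * (T a - (g a - g b)) + ∫ s in a..b, ψ s * (T s - (g s - g b)) := by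
    have hsplit : ∫ s in a..b, ψ s * (T s - (g s - g b)) =
        (∫ s in a..b, ψ s * T s) - ∫ s in a..b, ψ s * (g s - g b) := by
      simpa only [mul_sub] using intervalIntegral.integral_sub hT hgb
    rw [setIntegral_Ioc_eq_of_hasDerivAt ν hab hφ hψ, hparts, hsplit]
    ring
  have hbound : |∫ s in a..b, ψ s * (T s - (g s - g b))| ≤
      ε * ∫ s in a..b, ψ s * (g s + g b) := by
    rw [← intervalIntegral.integral_const_mul]
    refine (intervalIntegral.abs_integral_le_integral_abs hab).trans
      (intervalIntegral.integral_mono_on hab ?_ ?_ fun s hs => ?_)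
    · simpa only [mul_sub] using (hT.sub hgb).abs
    · exact (hψk _ (hgc.add continuousOn_const)).const_mul ε
    · rw [abs_mul, abs_of_nonneg (hψ₀ s hs)]
      nlinarith [hD s hs, hψ₀ s hs]
  have hsum : ∫ s in a..b, ψ s * (g s + g b) =
      (∫ s in a..b, ψ s * (g s - g b)) + 2 * g b * (φ b - φ a) := by
    have := intervalIntegral.integral_add hgb (hψi.const_mul (2 * g b))
    rw [intervalIntegral.integral_const_mul, hψint] at this
    rw [← this]
    congr 1; ext s; ring
  rw [hdiff]
  calc |φ a * (T a - (g a - g b)) + ∫ s in a..b, ψ s * (T s - (g s - g b))|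
      ≤ |φ a * (T a - (g a - g b))| + |∫ s in a..b, ψ s * (T s - (g s - g b))| := abs_add_le _ _
    _ ≤ φ a * (ε * (g a + g b)) + ε * ∫ s in a..b, ψ s * (g s + g b) := by
      rw [abs_mul, abs_of_nonneg hφa]
      gcongr
      exact hD a (left_mem_Icc.2 hab)
    _ = ε * ((∫ s in a..b, φ s * h s) + 2 * φ b * g b) := by
      rw [hsum, hparts]; ring

end StieltjesParts

noncomputable def gaussLikeConvTail (L₁ L₂ α₁ α₂ u : ℝ) : ℝ :=
  L₁ * L₂ * Real.sqrt Real.pi * (u / 2) ^ (α₁ + α₂ + 1) * Real.exp (-u ^ 2 / 4)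

lemma gaussLikeConvTail_pos {L₁ L₂ α₁ α₂ u : ℝ} (hL₁ : 0 < L₁) (hL₂ : 0 < L₂) (hu : 0 < u) :
    0 < gaussLikeConvTail L₁ L₂ α₁ α₂ u := by
  have := Real.rpow_pos_of_pos (half_pos hu) (α₁ + α₂ + 1)
  unfold gaussLikeConvTail; positivity

/-- Since `(s - p / s) * gaussLikeTail L₁ p s = -(gaussLikeTail L₁ p)' s`, this is the convolution
of the model tail `gaussLikeTail L₂ q` with the model density `-(gaussLikeTail L₁ p)'`, restricted
to `[U, u - U]`. -/
noncomputable def gaussLikeConvIntegral (L₁ L₂ p q U u : ℝ) : ℝ :=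
  ∫ s in U..(u - U), gaussLikeTail L₂ q (u - s) * ((s - p / s) * gaussLikeTail L₁ p s)

/-- The integrand of `gaussLikeConvIntegral` at `s = u / 2 + t`, divided by
`L₁ * L₂ * (u / 2) ^ (p + q + 1) * exp (-u ^ 2 / 4)`. -/
noncomputable def laplaceKernel (p q u t : ℝ) : ℝ :=
  (1 - 2 * t / u) ^ q * (1 + 2 * t / u) ^ (p + 1) * (1 - p / (u / 2 + t) ^ 2) * Real.exp (-t ^ 2)

lemma rpow_le_exp_of_inv_le {z M : ℝ} (β : ℝ) (hz : 0 < z) (hz₂ : z ≤ 2) (hM : 0 ≤ M)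
    (hzM : z⁻¹ ≤ 1 + M) : z ^ β ≤ Real.exp (|β| * (1 + M)) := by
  rw [Real.rpow_def_of_pos hz, Real.exp_le_exp]
  have hlog : |Real.log z| ≤ 1 + M := by
    have h₁ := Real.log_le_sub_one_of_pos hz
    have h₂ := Real.log_le_sub_one_of_pos (inv_pos.2 hz)
    rw [Real.log_inv] at h₂
    exact abs_le.2 ⟨by linarith, by linarith⟩
  calc Real.log z * β ≤ |β| * |Real.log z| := by
        rw [mul_comm, ← abs_mul]; exact le_abs_self _
    _ ≤ |β| * (1 + M) := mul_le_mul_of_nonneg_left hlog (abs_nonneg β)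

lemma abs_laplaceKernel_le {p q U u t : ℝ} (hU : 1 ≤ U) (hUp : |p| ≤ U ^ 2)
    (ht : t ∈ Ioc (U - u / 2) (u / 2 - U)) :
    |laplaceKernel p q u t| ≤ 2 * Real.exp ((|q| + |p + 1|) * (1 + |t|) - t ^ 2) := by
  obtain ⟨ht₁, ht₂⟩ := ht
  have hu : 0 < u := by linarith
  have habs := abs_nonneg t
  have hle := le_abs_self t
  have hge := neg_abs_le t
  have e₁ : 1 - 2 * t / u = (u - 2 * t) / u := by field_simp
  have e₂ : 1 + 2 * t / u = (u + 2 * t) / u := by field_simp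
  have hz₁ : 0 < 1 - 2 * t / u := by rw [e₁]; exact div_pos (by linarith) hu
  have hz₂ : 0 < 1 + 2 * t / u := by rw [e₂]; exact div_pos (by linarith) hu
  have hb₁ := rpow_le_exp_of_inv_le q hz₁ (by rw [e₁, div_le_iff₀ hu]; linarith) habs
    (by rw [e₁, inv_div, div_le_iff₀ (by linarith)]; nlinarith)
  have hb₂ := rpow_le_exp_of_inv_le (p + 1) hz₂ (by rw [e₂, div_le_iff₀ hu]; linarith) habs
    (by rw [e₂, inv_div, div_le_iff₀ (by linarith)]; nlinarith)
  have hb₃ : |1 - p / (u / 2 + t) ^ 2| ≤ 2 := by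
    have hsq : U ^ 2 ≤ (u / 2 + t) ^ 2 := pow_le_pow_left₀ (by linarith) (by linarith) 2
    have : |p / (u / 2 + t) ^ 2| ≤ 1 := by
      rw [abs_div, abs_of_nonneg (sq_nonneg (u / 2 + t)), div_le_one (by nlinarith)]; linarith
    linarith [abs_sub (1 : ℝ) (p / (u / 2 + t) ^ 2), abs_one (α := ℝ)]
  unfold laplaceKernel
  rw [abs_mul, abs_mul, abs_mul, abs_of_pos (Real.rpow_pos_of_pos hz₁ q),
    abs_of_pos (Real.rpow_pos_of_pos hz₂ (p + 1)), abs_of_pos (Real.exp_pos _)]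
  calc _ ≤ Real.exp (|q| * (1 + |t|)) * Real.exp (|p + 1| * (1 + |t|)) * 2 * Real.exp (-t ^ 2) := by
        gcongr
    _ = 2 * Real.exp ((|q| + |p + 1|) * (1 + |t|) - t ^ 2) := by
        rw [show (|q| + |p + 1|) * (1 + |t|) - t ^ 2 =
          |q| * (1 + |t|) + |p + 1| * (1 + |t|) + -t ^ 2 by ring, Real.exp_add, Real.exp_add]
        ring

lemma integrable_exp_mul_one_add_abs_sub_sq (c : ℝ) :
    Integrable fun t : ℝ => Real.exp (c * (1 + |t|) - t ^ 2) := by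
  refine ((integrable_exp_neg_mul_sq (b := 1 / 2) (by norm_num)).const_mul
    (Real.exp (c + c ^ 2 / 2))).mono' (by fun_prop) (ae_of_all _ fun t => ?_)
  rw [Real.norm_eq_abs, abs_of_pos (Real.exp_pos _), ← Real.exp_add, Real.exp_le_exp]
  nlinarith [sq_nonneg (|t| - c), sq_abs t]

lemma tendsto_laplaceKernel (p q t : ℝ) :
    Tendsto (fun u => laplaceKernel p q u t) atTop (𝓝 (Real.exp (-t ^ 2))) := by
  have h₀ : Tendsto (fun u : ℝ => 2 * t / u) atTop (𝓝 0) :=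
    tendsto_const_nhds.div_atTop tendsto_id
  have h₁ : Tendsto (fun u : ℝ => (1 - 2 * t / u) ^ q) atTop (𝓝 1) := by
    simpa using ((tendsto_const_nhds (x := (1 : ℝ))).sub h₀).rpow_const (p := q)
      (Or.inl (by norm_num))
  have h₂ : Tendsto (fun u : ℝ => (1 + 2 * t / u) ^ (p + 1)) atTop (𝓝 1) := by
    simpa using ((tendsto_const_nhds (x := (1 : ℝ))).add h₀).rpow_const (p := p + 1)
      (Or.inl (by norm_num))
  have h₃ : Tendsto (fun u : ℝ => p / (u / 2 + t) ^ 2) atTop (𝓝 0) :=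
    tendsto_const_nhds.div_atTop <| (tendsto_pow_atTop two_ne_zero).comp <|
      tendsto_atTop_add_const_right _ t (tendsto_id.atTop_div_const two_pos)
  simpa [laplaceKernel] using
    ((h₁.mul h₂).mul ((tendsto_const_nhds (x := (1 : ℝ))).sub h₃)).mul_const (Real.exp (-t ^ 2))

lemma tendsto_integral_laplaceKernel {p q U : ℝ} (hU : 1 ≤ U) (hUp : |p| ≤ U ^ 2) :
    Tendsto (fun u => ∫ t, (Ioc (U - u / 2) (u / 2 - U)).indicator (laplaceKernel p q u) t)
      atTop (𝓝 (Real.sqrt Real.pi)) := by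
  have hgauss : ∫ t : ℝ, Real.exp (-t ^ 2) = Real.sqrt Real.pi := by
    simpa using integral_gaussian 1
  rw [← hgauss]
  refine tendsto_integral_filter_of_dominated_convergence
    (fun t => 2 * Real.exp ((|q| + |p + 1|) * (1 + |t|) - t ^ 2)) ?_ ?_
    ((integrable_exp_mul_one_add_abs_sub_sq _).const_mul 2) ?_
  · exact Eventually.of_forall fun u =>
      ((by unfold laplaceKernel; fun_prop : Measurable (laplaceKernel p q u)).indicator
        measurableSet_Ioc).aestronglyMeasurable
  · refine Eventually.of_forall fun u => ae_of_all _ fun t => ?_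
    by_cases ht : t ∈ Ioc (U - u / 2) (u / 2 - U)
    · rw [indicator_of_mem ht, Real.norm_eq_abs]; exact abs_laplaceKernel_le hU hUp ht
    · rw [indicator_of_notMem ht, norm_zero]; positivity
  · refine ae_of_all _ fun t => (tendsto_laplaceKernel p q t).congr' ?_
    filter_upwards [eventually_ge_atTop (2 * (U + |t|) + 1)] with u hu
    exact (indicator_of_mem (show t ∈ Ioc (U - u / 2) (u / 2 - U) from
      ⟨by linarith [neg_abs_le t], by linarith [le_abs_self t]⟩) _).symm

lemma gaussLikeTail_mul_eq_laplaceKernel (L₁ L₂ p q : ℝ) {u t : ℝ} (h₁ : 0 < u / 2 - t)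
    (h₂ : 0 < u / 2 + t) :
    gaussLikeTail L₂ q (u / 2 - t) *
        ((u / 2 + t - p / (u / 2 + t)) * gaussLikeTail L₁ p (u / 2 + t))
      = L₁ * L₂ * (u / 2) ^ (p + q + 1) * Real.exp (-u ^ 2 / 4) * laplaceKernel p q u t := by
  obtain ⟨m, rfl⟩ : ∃ m, u = 2 * m := ⟨u / 2, by ring⟩
  rw [mul_div_cancel_left₀ m two_ne_zero] at h₁ h₂ ⊢
  have hm : 0 < m := by linarith
  have e₁ : 1 - 2 * t / (2 * m) = (m - t) / m := by field_simp
  have e₂ : 1 + 2 * t / (2 * m) = (m + t) / m := by field_simp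
  have hexp : Real.exp (-(m - t) ^ 2 / 2) * Real.exp (-(m + t) ^ 2 / 2) =
      Real.exp (-(2 * m) ^ 2 / 4) * Real.exp (-t ^ 2) := by
    rw [← Real.exp_add, ← Real.exp_add]; ring_nf
  have := Real.rpow_pos_of_pos hm p
  have := Real.rpow_pos_of_pos hm q
  calc _ = L₁ * L₂ * (m - t) ^ q * (m + t) ^ p * (m + t - p / (m + t)) *
        (Real.exp (-(m - t) ^ 2 / 2) * Real.exp (-(m + t) ^ 2 / 2)) := by
        unfold gaussLikeTail; ring
    _ = _ := by
        rw [hexp, laplaceKernel, e₁, e₂, Real.div_rpow h₁.le hm.le, Real.div_rpow h₂.le hm.le,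
          Real.rpow_add_one h₂.ne', Real.rpow_add_one hm.ne', Real.rpow_add_one hm.ne',
          Real.rpow_add hm]
        field_simp

lemma gaussLikeConvIntegral_eq {L₁ L₂ p q U u : ℝ} (hU : 0 < U) (hu : 2 * U ≤ u) :
    gaussLikeConvIntegral L₁ L₂ p q U u =
      L₁ * L₂ * (u / 2) ^ (p + q + 1) * Real.exp (-u ^ 2 / 4) *
        ∫ t, (Ioc (U - u / 2) (u / 2 - U)).indicator (laplaceKernel p q u) t := by
  have hshift := intervalIntegral.integral_comp_add_left
    (fun s => gaussLikeTail L₂ q (u - s) * ((s - p / s) * gaussLikeTail L₁ p s)) (u / 2)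
    (a := U - u / 2) (b := u / 2 - U)
  rw [show u / 2 + (U - u / 2) = U by ring, show u / 2 + (u / 2 - U) = u - U by ring] at hshift
  rw [gaussLikeConvIntegral, ← hshift, integral_indicator measurableSet_Ioc,
    ← intervalIntegral.integral_of_le (by linarith), ← intervalIntegral.integral_const_mul]
  refine intervalIntegral.integral_congr fun t ht => ?_
  rw [uIcc_of_le (by linarith)] at ht
  rw [show u - (u / 2 + t) = u / 2 - t by ring]
  exact gaussLikeTail_mul_eq_laplaceKernel L₁ L₂ p q (by linarith [ht.2]) (by linarith [ht.1])

lemma isEquivalent_gaussLikeConvIntegral {L₁ L₂ p q U : ℝ} (hL₁ : 0 < L₁) (hL₂ : 0 < L₂)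
    (hU : 1 ≤ U) (hUp : |p| ≤ U ^ 2) :
    gaussLikeConvIntegral L₁ L₂ p q U ~[atTop] gaussLikeConvTail L₁ L₂ p q := by
  have hπ : Real.sqrt Real.pi ≠ 0 := (Real.sqrt_pos.2 Real.pi_pos).ne'
  refine Asymptotics.isEquivalent_of_tendsto_one ?_
  have := (tendsto_integral_laplaceKernel (q := q) hU hUp).div_const (Real.sqrt Real.pi)
  rw [div_self hπ] at this
  refine this.congr' ?_
  filter_upwards [eventually_ge_atTop (2 * U + 1)] with u hu
  have hA : 0 < L₁ * L₂ * (u / 2) ^ (p + q + 1) * Real.exp (-u ^ 2 / 4) := by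
    have := Real.rpow_pos_of_pos (show 0 < u / 2 by linarith) (p + q + 1)
    positivity
  rw [Pi.div_apply, gaussLikeConvIntegral_eq (by linarith) (by linarith), gaussLikeConvTail,
    show L₁ * L₂ * Real.sqrt Real.pi * (u / 2) ^ (p + q + 1) * Real.exp (-u ^ 2 / 4) =
      L₁ * L₂ * (u / 2) ^ (p + q + 1) * Real.exp (-u ^ 2 / 4) * Real.sqrt Real.pi by ring,
    mul_div_mul_left _ _ hA.ne']

lemma isLittleO_gaussLikeTail_sub (L α β : ℝ) {V : ℝ} (hV : 0 ≤ V) :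
    (fun u => gaussLikeTail L α (u - V)) =o[atTop]
      fun u => (u / 2) ^ β * Real.exp (-u ^ 2 / 4) := by
  have hlim : Tendsto (fun u : ℝ => |L| * (u ^ (|α| + |β|) * Real.exp (-u))) atTop (𝓝 0) := by
    simpa using (tendsto_rpow_mul_exp_neg_mul_atTop_nhds_zero (|α| + |β|) 1 one_pos).const_mul |L|
  refine (isLittleO_iff_tendsto' ?_).2 (squeeze_zero_norm' ?_ hlim)
  · filter_upwards [eventually_gt_atTop 0] with u hu h
    have := Real.rpow_pos_of_pos (half_pos hu) β
    exact absurd h (by positivity)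
  filter_upwards [eventually_ge_atTop (4 * (V + 1))] with u hu
  have hu₀ : 0 < u := by linarith
  have hu₂ : 1 ≤ u / 2 := by linarith
  have hg := Real.rpow_pos_of_pos (half_pos hu₀) β
  have hb₁ : (u - V) ^ α ≤ u ^ |α| :=
    (Real.rpow_le_rpow_of_exponent_le (by linarith) (le_abs_self α)).trans
      (Real.rpow_le_rpow (by linarith) (by linarith) (abs_nonneg α))
  have hb₂ : 1 ≤ u ^ |β| * (u / 2) ^ β :=
    calc 1 ≤ (u / 2) ^ (|β| + β) := Real.one_le_rpow hu₂ (by linarith [neg_abs_le β])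
      _ = (u / 2) ^ |β| * (u / 2) ^ β := Real.rpow_add (by linarith) _ _
      _ ≤ u ^ |β| * (u / 2) ^ β := by gcongr; linarith
  have hb₃ : Real.exp (-(u - V) ^ 2 / 2) ≤ Real.exp (-u) * Real.exp (-u ^ 2 / 4) := by
    rw [← Real.exp_add, Real.exp_le_exp]
    nlinarith [mul_nonneg hu₀.le (show 0 ≤ u / 4 - V - 1 by linarith), sq_nonneg V]
  rw [Real.norm_eq_abs, abs_div,
    abs_of_pos (by positivity : 0 < (u / 2) ^ β * Real.exp (-u ^ 2 / 4)),
    div_le_iff₀ (by positivity), gaussLikeTail, abs_mul, abs_mul,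
    abs_of_pos (Real.rpow_pos_of_pos (by linarith : 0 < u - V) α), abs_of_pos (Real.exp_pos _)]
  calc |L| * (u - V) ^ α * Real.exp (-(u - V) ^ 2 / 2)
      ≤ |L| * u ^ |α| * (Real.exp (-u) * Real.exp (-u ^ 2 / 4)) := by gcongr
    _ ≤ |L| * u ^ |α| * (Real.exp (-u) * Real.exp (-u ^ 2 / 4)) * (u ^ |β| * (u / 2) ^ β) :=
        le_mul_of_one_le_right (by positivity) hb₂
    _ = |L| * (u ^ (|α| + |β|) * Real.exp (-u)) * ((u / 2) ^ β * Real.exp (-u ^ 2 / 4)) := by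
        rw [Real.rpow_add hu₀]; ring

lemma isLittleO_gaussLikeTail_sub_gaussLikeConvTail (L α : ℝ) {L₁ L₂ α₁ α₂ V : ℝ} (hL₁ : L₁ ≠ 0)
    (hL₂ : L₂ ≠ 0) (hV : 0 ≤ V) :
    (fun u => gaussLikeTail L α (u - V)) =o[atTop] gaussLikeConvTail L₁ L₂ α₁ α₂ := by
  have hC : L₁ * L₂ * Real.sqrt Real.pi ≠ 0 :=
    mul_ne_zero (mul_ne_zero hL₁ hL₂) (Real.sqrt_pos.2 Real.pi_pos).ne'
  refine ((isLittleO_gaussLikeTail_sub L α (α₁ + α₂ + 1) hV).const_mul_right' hC.isUnit).congr_right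
    fun u => ?_
  rw [gaussLikeConvTail]; ring

lemma isLittleO_gaussLikeTail_sub_add {L₁ L₂ α₁ α₂ U : ℝ} (hL₁ : L₁ ≠ 0) (hL₂ : L₂ ≠ 0)
    (hU : 0 ≤ U) :
    (fun u => gaussLikeTail L₂ α₂ (u - U) + gaussLikeTail L₁ α₁ (u - U) +
      gaussLikeTail L₂ α₂ U * gaussLikeTail L₁ α₁ (u - U)) =o[atTop]
        gaussLikeConvTail L₁ L₂ α₁ α₂ :=
  have h₁ := isLittleO_gaussLikeTail_sub_gaussLikeConvTail L₁ α₁ (α₁ := α₁) (α₂ := α₂) hL₁ hL₂ hU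
  ((isLittleO_gaussLikeTail_sub_gaussLikeConvTail L₂ α₂ hL₁ hL₂ hU).add h₁).add
    (h₁.const_mul_left _)

lemma abs_setIntegral_sub_le_mul {α : Type*} [MeasurableSpace α] {μ : Measure α} {s : Set α}
    (hs : MeasurableSet s) {f g : α → ℝ} (hf : IntegrableOn f s μ) (hg : IntegrableOn g s μ)
    {ε : ℝ} (hfg : ∀ x ∈ s, |f x - g x| ≤ ε * g x) :
    |∫ x in s, f x ∂μ - ∫ x in s, g x ∂μ| ≤ ε * ∫ x in s, g x ∂μ := by
  rw [← integral_sub hf hg, ← integral_const_mul]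
  exact abs_integral_le_integral_abs.trans
    (setIntegral_mono_on (hf.sub hg).abs (hg.const_mul ε) hs hfg)

lemma measureReal_add_gt_eq_integral {Ω : Type*} [MeasurableSpace Ω] {μ : Measure Ω}
    [IsFiniteMeasure μ] {X₁ X₂ : Ω → ℝ} (hm₁ : Measurable X₁) (hm₂ : Measurable X₂)
    (hind : IndepFun X₁ X₂ μ) (u : ℝ) :
    μ.real {ω | X₁ ω + X₂ ω > u} = ∫ x, (μ.map X₂).real (Ioi (u - x)) ∂μ.map X₁ := by
  have hs : MeasurableSet {p : ℝ × ℝ | p.1 + p.2 > u} :=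
    measurableSet_lt measurable_const (measurable_fst.add measurable_snd)
  have hprod := (indepFun_iff_map_prod_eq_prod_map_map hm₁.aemeasurable hm₂.aemeasurable).1 hind
  have hmono : Monotone fun x => μ.map X₂ (Ioi (u - x)) := fun x y hxy =>
    measure_mono (Ioi_subset_Ioi (by linarith))
  have hslice : ∀ x : ℝ, Prod.mk x ⁻¹' {p : ℝ × ℝ | p.1 + p.2 > u} = Ioi (u - x) := by
    intro x; ext y
    simp only [mem_preimage, mem_ofPred_eq, mem_Ioi]
    constructor <;> intro h <;> linarith
  rw [measureReal_def, show {ω | X₁ ω + X₂ ω > u} = (fun ω => (X₁ ω, X₂ ω)) ⁻¹' {p | p.1 + p.2 > u}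
    from rfl, ← Measure.map_apply (hm₁.prodMk hm₂) hs, hprod, Measure.prod_apply hs]
  simp_rw [hslice]
  exact (integral_toReal hmono.measurable.aemeasurable
    (ae_of_all _ fun _ => measure_lt_top _ _)).symm

lemma abs_integral_sub_setIntegral_Ioc_le (ν₁ ν₂ : Measure ℝ) [IsProbabilityMeasure ν₁]
    [IsProbabilityMeasure ν₂] {U u : ℝ} (hU : U ≤ u - U) :
    |∫ x, ν₂.real (Ioi (u - x)) ∂ν₁ - ∫ x in Ioc U (u - U), ν₂.real (Ioi (u - x)) ∂ν₁| ≤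
      ν₂.real (Ioi (u - U)) + ν₁.real (Ioi (u - U)) := by
  set f : ℝ → ℝ := fun x => ν₂.real (Ioi (u - x))
  have hmono : Monotone f := fun x y hxy => measureReal_mono (Ioi_subset_Ioi (by linarith))
  have hnorm : ∀ x, ‖f x‖ = f x := fun x => Real.norm_of_nonneg measureReal_nonneg
  have hf : Integrable f ν₁ := Integrable.of_bound hmono.measurable.aestronglyMeasurable 1
    (ae_of_all _ fun x => (hnorm x).trans_le measureReal_le_one)
  have hsplit : ∫ x, f x ∂ν₁ = ∫ x in Iic U, f x ∂ν₁ + ∫ x in Ioc U (u - U), f x ∂ν₁ +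
      ∫ x in Ioi (u - U), f x ∂ν₁ := by
    rw [← integral_add_compl measurableSet_Iic hf, compl_Iic, ← Ioc_union_Ioi_eq_Ioi hU,
      setIntegral_union (Ioc_disjoint_Ioi le_rfl) measurableSet_Ioi hf.integrableOn hf.integrableOn]
    ring
  have hleft : ∫ x in Iic U, f x ∂ν₁ ≤ ν₂.real (Ioi (u - U)) := by
    refine (le_abs_self _).trans ((norm_setIntegral_le_of_norm_le_const (measure_lt_top _ _)
      fun x hx => (hnorm x).trans_le (hmono hx)).trans ?_)
    exact mul_le_of_le_one_right measureReal_nonneg measureReal_le_one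
  have hright : ∫ x in Ioi (u - U), f x ∂ν₁ ≤ ν₁.real (Ioi (u - U)) := by
    refine (le_abs_self _).trans ((norm_setIntegral_le_of_norm_le_const (measure_lt_top _ _)
      fun x _ => (hnorm x).trans_le measureReal_le_one).trans ?_)
    rw [one_mul]
  have h₀ : ∀ s, 0 ≤ ∫ x in s, f x ∂ν₁ := fun s => integral_nonneg fun _ => measureReal_nonneg
  rw [hsplit, abs_le]
  constructor <;> linarith [h₀ (Iic U), h₀ (Ioi (u - U))]

lemma abs_setIntegral_gaussLikeTail_sub_le (ν : Measure ℝ) [IsFiniteMeasure ν]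
    {L₁ L₂ α₁ α₂ U u ε : ℝ} (hL₂ : 0 < L₂) (hU : 0 < U) (hUα : |α₂| ≤ U ^ 2) (hu : 2 * U ≤ u)
    (htail : ∀ v ≥ U, |ν.real (Ioi v) - gaussLikeTail L₁ α₁ v| ≤ ε * gaussLikeTail L₁ α₁ v) :
    |∫ x in Ioc U (u - U), gaussLikeTail L₂ α₂ (u - x) ∂ν - gaussLikeConvIntegral L₁ L₂ α₁ α₂ U u| ≤
      ε * (gaussLikeConvIntegral L₁ L₂ α₁ α₂ U u +
        2 * gaussLikeTail L₂ α₂ U * gaussLikeTail L₁ α₁ (u - U)) := by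
  have hsub : ∀ x ∈ Icc U (u - U), U ≤ u - x := fun x hx => by linarith [hx.2]
  have hpos : ∀ x ∈ Icc U (u - U), 0 < u - x := fun x hx => hU.trans_le (hsub x hx)
  have hcont : ContinuousOn (fun x => u - x) (Icc U (u - U)) :=
    continuousOn_const.sub continuousOn_id
  have hinv : ∀ {f : ℝ → ℝ} {c : ℝ}, ContinuousOn f (Icc U (u - U)) →
      (∀ x ∈ Icc U (u - U), 0 < f x) → ContinuousOn (fun x => f x - c / f x) (Icc U (u - U)) :=
    fun hf hf₀ => hf.sub (continuousOn_const.div hf fun x hx => (hf₀ x hx).ne')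
  have h := abs_setIntegral_sub_integral_le ν (by linarith)
    (φ := fun x => gaussLikeTail L₂ α₂ (u - x))
    (ψ := fun x => (u - x - α₂ / (u - x)) * gaussLikeTail L₂ α₂ (u - x)) (g := gaussLikeTail L₁ α₁)
    (h := fun s => (s - α₁ / s) * gaussLikeTail L₁ α₁ s)
    (fun x hx => ((hasDerivAt_gaussLikeTail L₂ α₂ (hpos x hx)).comp x
      ((hasDerivAt_id x).const_sub u)).congr_deriv (by ring))
    ((hinv hcont hpos).mul ((continuousOn_gaussLikeTail L₂ α₂).comp hcont hpos))
    (fun x hx => mul_nonneg (by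
      rw [sub_nonneg, div_le_iff₀ (hpos x hx)]
      nlinarith [le_abs_self α₂, hsub x hx]) (gaussLikeTail_pos hL₂ (hpos x hx)).le)
    (gaussLikeTail_pos hL₂ (hpos U ⟨le_rfl, by linarith⟩)).le
    (fun x hx => (hasDerivAt_gaussLikeTail L₁ α₁ (hU.trans_le hx.1)).congr_deriv (by ring))
    ((hinv continuousOn_id fun x hx => hU.trans_le hx.1).mul
      ((continuousOn_gaussLikeTail L₁ α₁).mono fun x hx => hU.trans_le hx.1))
    (fun v hv => htail v hv.1)
  simpa only [sub_sub_cancel, gaussLikeConvIntegral] using h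

lemma abs_integral_tail_sub_le (ν₁ ν₂ : Measure ℝ) [IsProbabilityMeasure ν₁]
    [IsProbabilityMeasure ν₂] {L₁ L₂ α₁ α₂ U u ε : ℝ} (hL₁ : 0 < L₁) (hL₂ : 0 < L₂) (hε : 0 ≤ ε)
    (hε' : ε ≤ 1 / 2) (hU : 0 < U) (hUα : |α₂| ≤ U ^ 2) (hu : 2 * U ≤ u)
    (ht₁ : ∀ v ≥ U, |ν₁.real (Ioi v) - gaussLikeTail L₁ α₁ v| ≤ ε * gaussLikeTail L₁ α₁ v)
    (ht₂ : ∀ v ≥ U, |ν₂.real (Ioi v) - gaussLikeTail L₂ α₂ v| ≤ ε * gaussLikeTail L₂ α₂ v) :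
    |∫ x, ν₂.real (Ioi (u - x)) ∂ν₁ - gaussLikeConvIntegral L₁ L₂ α₁ α₂ U u| ≤
      3 * ε * |gaussLikeConvIntegral L₁ L₂ α₁ α₂ U u| +
      2 * (gaussLikeTail L₂ α₂ (u - U) + gaussLikeTail L₁ α₁ (u - U) +
        gaussLikeTail L₂ α₂ U * gaussLikeTail L₁ α₁ (u - U)) := by
  set J := gaussLikeConvIntegral L₁ L₂ α₁ α₂ U u
  set B := ∫ x in Ioc U (u - U), gaussLikeTail L₂ α₂ (u - x) ∂ν₁
  set M := ∫ x in Ioc U (u - U), ν₂.real (Ioi (u - x)) ∂ν₁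
  set E := gaussLikeTail L₂ α₂ U * gaussLikeTail L₁ α₁ (u - U)
  have hUu : U ≤ u - U := by linarith
  have hpos : ∀ x ∈ Icc U (u - U), 0 < u - x := fun x hx => by linarith [hx.2]
  have hgB : IntegrableOn (fun x => gaussLikeTail L₂ α₂ (u - x)) (Ioc U (u - U)) ν₁ :=
    ((continuousOn_gaussLikeTail L₂ α₂).comp (continuousOn_const.sub continuousOn_id) hpos
      |>.integrableOn_Icc).mono_set Ioc_subset_Icc_self
  have hgM : IntegrableOn (fun x => ν₂.real (Ioi (u - x))) (Ioc U (u - U)) ν₁ :=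
    Integrable.of_bound (Monotone.measurable fun x y hxy =>
      measureReal_mono (Ioi_subset_Ioi (by linarith))).aestronglyMeasurable 1
      (ae_of_all _ fun x => (Real.norm_of_nonneg measureReal_nonneg).trans_le measureReal_le_one)
  have hPM : |∫ x, ν₂.real (Ioi (u - x)) ∂ν₁ - M| ≤ ν₂.real (Ioi (u - U)) + ν₁.real (Ioi (u - U)) :=
    abs_integral_sub_setIntegral_Ioc_le ν₁ ν₂ hUu
  have hMB : |M - B| ≤ ε * B := abs_setIntegral_sub_le_mul measurableSet_Ioc hgM hgB
    fun x hx => ht₂ (u - x) (by linarith [hx.2])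
  have hBJ : |B - J| ≤ ε * (J + 2 * E) := by
    simpa only [mul_assoc] using abs_setIntegral_gaussLikeTail_sub_le ν₁ hL₂ hU hUα hu ht₁
  have hg₁ := gaussLikeTail_pos (a := α₁) hL₁ (show 0 < u - U by linarith)
  have hg₂ := gaussLikeTail_pos (a := α₂) hL₂ (show 0 < u - U by linarith)
  have hE : 0 ≤ E := mul_nonneg (gaussLikeTail_pos hL₂ hU).le hg₁.le
  have hεJ : ε * J ≤ ε * |J| := mul_le_mul_of_nonneg_left (le_abs_self J) hε
  have hεJ' : ε * |J| ≤ 1 / 2 * |J| := mul_le_mul_of_nonneg_right hε' (abs_nonneg J)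
  have hεE : ε * E ≤ 1 / 2 * E := mul_le_mul_of_nonneg_right hε' hE
  have hεB : ε * B ≤ ε * (2 * |J| + E) :=
    mul_le_mul_of_nonneg_left (by linarith [(abs_le.1 hBJ).2, le_abs_self J, abs_nonneg J]) hε
  linarith [abs_sub_le (∫ x, ν₂.real (Ioi (u - x)) ∂ν₁) M B,
    abs_sub_le (∫ x, ν₂.real (Ioi (u - x)) ∂ν₁) B J, mul_nonneg hε (abs_nonneg J),
    (abs_le.1 (ht₁ (u - U) hUu)).2, (abs_le.1 (ht₂ (u - U) hUu)).2,
    mul_le_mul_of_nonneg_right hε' hg₁.le, mul_le_mul_of_nonneg_right hε' hg₂.le]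

lemma Asymptotics.IsEquivalent.eventually_abs_sub_le_mul {α : Type*} {l : Filter α} {f g : α → ℝ}
    (h : f ~[l] g) (hg : ∀ᶠ x in l, 0 ≤ g x) {ε : ℝ} (hε : 0 < ε) :
    ∀ᶠ x in l, |f x - g x| ≤ ε * g x :=
  (h.isLittleO.bound hε).mp <| hg.mono fun x hx hb => by
    rwa [Pi.sub_apply, Real.norm_eq_abs, Real.norm_eq_abs, abs_of_nonneg hx] at hb

theorem isEquivalent_integral_tail_gaussLikeConvTail (ν₁ ν₂ : Measure ℝ) [IsProbabilityMeasure ν₁]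
    [IsProbabilityMeasure ν₂] {L₁ L₂ α₁ α₂ : ℝ} (hL₁ : 0 < L₁) (hL₂ : 0 < L₂)
    (h₁ : (fun v => ν₁.real (Ioi v)) ~[atTop] gaussLikeTail L₁ α₁)
    (h₂ : (fun v => ν₂.real (Ioi v)) ~[atTop] gaussLikeTail L₂ α₂) :
    (fun u => ∫ x, ν₂.real (Ioi (u - x)) ∂ν₁) ~[atTop] gaussLikeConvTail L₁ L₂ α₁ α₂ := by
  refine isLittleO_iff.2 fun c hc => ?_
  set ε := min (c / 8) (1 / 2)
  have hε : 0 < ε := lt_min (by positivity) (by norm_num)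
  have hg : ∀ {L α : ℝ}, 0 < L → ∀ᶠ v in atTop, 0 ≤ gaussLikeTail L α v := fun hL =>
    (eventually_gt_atTop 0).mono fun v hv => (gaussLikeTail_pos hL hv).le
  obtain ⟨U₀, hU₀⟩ := eventually_atTop.1 ((h₁.eventually_abs_sub_le_mul (hg hL₁) hε).and
    (h₂.eventually_abs_sub_le_mul (hg hL₂) hε))
  set U := max U₀ (max 1 (|α₁| + |α₂|))
  have hU₀U : U₀ ≤ U := le_max_left _ _
  have hU₁ : 1 ≤ U := (le_max_left _ _).trans (le_max_right _ _)
  have hUα : |α₁| + |α₂| ≤ U := (le_max_right _ _).trans (le_max_right _ _)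
  have hUα₁ : |α₁| ≤ U ^ 2 := by nlinarith [abs_nonneg α₂]
  have hUα₂ : |α₂| ≤ U ^ 2 := by nlinarith [abs_nonneg α₁]
  have hJ := (isEquivalent_gaussLikeConvIntegral (q := α₂) hL₁ hL₂ hU₁ hUα₁)
    |>.eventually_abs_sub_le_mul
    ((eventually_gt_atTop 0).mono fun u hu => (gaussLikeConvTail_pos hL₁ hL₂ hu).le) hε
  have hR := isLittleO_gaussLikeTail_sub_add (α₁ := α₁) (α₂ := α₂) hL₁.ne' hL₂.ne'
    (show 0 ≤ U by linarith)
  filter_upwards [hJ, hR.bound hε, eventually_ge_atTop (2 * U)] with u hJu hRu hu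
  have hH := gaussLikeConvTail_pos (α₁ := α₁) (α₂ := α₂) hL₁ hL₂ (show 0 < u by linarith)
  have hP := abs_integral_tail_sub_le ν₁ ν₂ hL₁ hL₂ hε.le (min_le_right _ _) (by linarith) hUα₂ hu
    (fun v hv => (hU₀ v (hU₀U.trans hv)).1) (fun v hv => (hU₀ v (hU₀U.trans hv)).2)
  simp only [Pi.sub_apply, Real.norm_eq_abs, abs_of_pos hH] at hRu ⊢
  set J := gaussLikeConvIntegral L₁ L₂ α₁ α₂ U u
  set H := gaussLikeConvTail L₁ L₂ α₁ α₂ u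
  have hεJ : ε * |J| ≤ ε * (3 / 2 * H) := by
    refine mul_le_mul_of_nonneg_left ?_ hε.le
    have : ε * H ≤ H / 2 := by nlinarith [min_le_right (c / 8) (1 / 2)]
    linarith [abs_sub_abs_le_abs_sub J H, abs_of_pos hH]
  have hεc : ε * H ≤ c / 8 * H := mul_le_mul_of_nonneg_right (min_le_left _ _) hH.le
  linarith [mul_pos hc hH, abs_sub_le (∫ x, ν₂.real (Ioi (u - x)) ∂ν₁) J H, le_abs_self
    (gaussLikeTail L₂ α₂ (u - U) + gaussLikeTail L₁ α₁ (u - U) +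
      gaussLikeTail L₂ α₂ U * gaussLikeTail L₁ α₁ (u - U))]

/-- Tail asymptotics for the sum of two independent Gaussian-like risks with constant
slowly-varying terms: P(X₁ + X₂ > u) ∼ L₁L₂√π · (u/2)^{α₁+α₂+1} · exp(−u²/4). -/
theorem sum_two_gaussian_like_const_tail {Ω : Type*} [MeasurableSpace Ω] (μ : Measure Ω)
    [IsProbabilityMeasure μ] (X₁ X₂ : Ω → ℝ)
    (hm₁ : Measurable X₁) (hm₂ : Measurable X₂)
    (hind : IndepFun X₁ X₂ μ)
    (L₁ L₂ α₁ α₂ : ℝ) (hL₁ : 0 < L₁) (hL₂ : 0 < L₂)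
    (htail₁ : Tendsto (fun u : ℝ => (μ {ω | X₁ ω > u}).toReal /
        (L₁ * u ^ α₁ * Real.exp (-u ^ 2 / 2))) atTop (𝓝 1))
    (htail₂ : Tendsto (fun u : ℝ => (μ {ω | X₂ ω > u}).toReal /
        (L₂ * u ^ α₂ * Real.exp (-u ^ 2 / 2))) atTop (𝓝 1)) :
    Tendsto (fun u : ℝ => (μ {ω | X₁ ω + X₂ ω > u}).toReal /
        (L₁ * L₂ * Real.sqrt Real.pi * (u / 2) ^ (α₁ + α₂ + 1) * Real.exp (-u ^ 2 / 4)))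
      atTop (𝓝 1) := by
  have := Measure.isProbabilityMeasure_map (μ := μ) hm₁.aemeasurable
  have := Measure.isProbabilityMeasure_map (μ := μ) hm₂.aemeasurable
  have hlaw : ∀ {X : Ω → ℝ}, Measurable X → ∀ u,
      (μ {ω | X ω > u}).toReal = (μ.map X).real (Ioi u) :=
    fun hX u => by rw [measureReal_def, Measure.map_apply hX measurableSet_Ioi]; rfl
  have h₁ : (fun v => (μ.map X₁).real (Ioi v)) ~[atTop] gaussLikeTail L₁ α₁ :=
    isEquivalent_of_tendsto_one (htail₁.congr fun u => by rw [hlaw hm₁]; rfl)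
  have h₂ : (fun v => (μ.map X₂).real (Ioi v)) ~[atTop] gaussLikeTail L₂ α₂ :=
    isEquivalent_of_tendsto_one (htail₂.congr fun u => by rw [hlaw hm₂]; rfl)
  have hH : ∀ᶠ u in atTop, gaussLikeConvTail L₁ L₂ α₁ α₂ u ≠ 0 :=
    (eventually_gt_atTop 0).mono fun u hu => (gaussLikeConvTail_pos hL₁ hL₂ hu).ne'
  refine ((isEquivalent_iff_tendsto_one hH).1
    (isEquivalent_integral_tail_gaussLikeConvTail _ _ hL₁ hL₂ h₁ h₂)).congr fun u => ?_
  rw [Pi.div_apply, ← measureReal_add_gt_eq_integral hm₁ hm₂ hind, measureReal_def]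
  rfl
end

section
/- Let n = 2 and S₁, S₂ be independent [0,1]-valued random variables with P(Sᵢ > 1 − t/x)/P(Sᵢ > 1 − 1/x) → t^{γᵢ} as x → ∞ for all t > 0, where γᵢ ≥ 0. Then for λ ∈ (0,1), P(λS₁ + (1−λ)S₂ > u) ∼ λ^{−γ₁}(1−λ)^{−γ₂} · Γ(γ₁+1)Γ(γ₂+1)/Γ(γ₁+γ₂+1) · P(S₁ > u)P(S₂ > u) as u ↑ 1. -/
/-!
Put `Xᵢ = 1 - Sᵢ` and `s = 1 - u`, so that `Gᵢ(s) = P(Xᵢ < s)` is regularly varying at `0⁺` with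
index `γᵢ` and the event is `λX₁ + (1 - λ)X₂ < s`. Slicing `(1 - λ)X₂` along the grid `k s / m`
and using independence on each slice sandwiches its probability between the right- and left-tagged
Riemann–Stieltjes sums of `x ↦ G₁((1 - x)s/λ)` against `x ↦ G₂(xs/(1 - λ))`. After division by
`G₁(s)G₂(s)` these converge, for fixed `m` as `s → 0⁺`, to `λ^(-γ₁)(1 - λ)^(-γ₂)` times the sums of
`(1 - x)^γ₁` against `x^γ₂`, and those converge as `m → ∞` to
`∫₀¹ (1 - x)^γ₁ d(x^γ₂) = Γ(γ₁ + 1)Γ(γ₂ + 1)/Γ(γ₁ + γ₂ + 1)`.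
-/

open MeasureTheory ProbabilityTheory Filter
open scoped Topology

open Set

/-- Unlike `x ^ γ`, this vanishes at `0` also for `γ = 0`, as does the limit of `G (c * s) / G s`
when `G` vanishes on `(-∞, 0]`. -/
noncomputable def rpowPos (γ : ℝ) : ℝ → ℝ := (Ioi 0).indicator (· ^ γ)

section rpowPos

variable {γ x : ℝ}

lemma rpowPos_of_pos (hx : 0 < x) : rpowPos γ x = x ^ γ := indicator_of_mem hx _

lemma rpowPos_of_nonpos (hx : x ≤ 0) : rpowPos γ x = 0 := indicator_of_notMem (not_lt.2 hx) _

lemma eqOn_rpowPos (hγ : γ ≠ 0) : EqOn (rpowPos γ) (· ^ γ) (Ici 0) := by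
  intro x (hx : 0 ≤ x)
  rcases hx.eq_or_lt with rfl | hx
  · exact (rpowPos_of_nonpos le_rfl).trans (Real.zero_rpow hγ).symm
  · exact rpowPos_of_pos hx

lemma monotone_rpowPos (hγ : 0 ≤ γ) : Monotone (rpowPos γ) := by
  intro x y hxy
  rcases le_or_gt x 0 with hx | hx
  · rw [rpowPos_of_nonpos hx]
    exact indicator_nonneg (fun z hz => Real.rpow_nonneg (mem_Ioi.1 hz).le γ) y
  · rw [rpowPos_of_pos hx, rpowPos_of_pos (hx.trans_le hxy)]
    exact Real.rpow_le_rpow hx.le hxy hγ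

lemma rpowPos_div {c : ℝ} (hc : 0 < c) (x : ℝ) : rpowPos γ (x / c) = c ^ (-γ) * rpowPos γ x := by
  rcases le_or_gt x 0 with hx | hx
  · rw [rpowPos_of_nonpos hx, rpowPos_of_nonpos (div_nonpos_of_nonpos_of_nonneg hx hc.le),
      mul_zero]
  · rw [rpowPos_of_pos hx, rpowPos_of_pos (div_pos hx hc), Real.div_rpow hx.le hc.le,
      Real.rpow_neg hc.le, div_eq_inv_mul]

lemma continuousAt_rpowPos (hx : 0 < x) : ContinuousAt (rpowPos γ) x :=
  (Real.continuousAt_rpow_const x γ (Or.inl hx.ne')).congr <|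
    (eventually_gt_nhds hx).mono fun _ hy => (rpowPos_of_pos hy).symm

lemma continuousOn_rpowPos (hγ : 0 < γ) : ContinuousOn (rpowPos γ) (Ici 0) :=
  (Real.continuous_rpow_const hγ.le).continuousOn.congr (eqOn_rpowPos hγ.ne')

end rpowPos

def IsRegularlyVaryingAtZero (G : ℝ → ℝ) (γ : ℝ) : Prop :=
  ∀ c > 0, Tendsto (fun s => G (c * s) / G s) (𝓝[>] 0) (𝓝 (c ^ γ))

namespace IsRegularlyVaryingAtZero

variable {G : ℝ → ℝ} {γ : ℝ}

lemma of_tendsto_atTop (h : ∀ t > 0, Tendsto (fun x => G (t / x) / G (1 / x)) atTop (𝓝 (t ^ γ))) :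
    IsRegularlyVaryingAtZero G γ := fun c hc =>
  ((h c hc).comp tendsto_inv_nhdsGT_zero).congr fun s => by simp [div_inv_eq_mul]

lemma tendsto_div_rpowPos (hG : IsRegularlyVaryingAtZero G γ) (hG0 : ∀ x ≤ 0, G x = 0) (c : ℝ) :
    Tendsto (fun s => G (c * s) / G s) (𝓝[>] 0) (𝓝 (rpowPos γ c)) := by
  rcases lt_or_ge 0 c with hc | hc
  · rw [rpowPos_of_pos hc]
    exact hG c hc
  · rw [rpowPos_of_nonpos hc]
    refine tendsto_const_nhds.congr' ?_
    filter_upwards [self_mem_nhdsWithin] with s (hs : 0 < s)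
    rw [hG0 _ (mul_nonpos_of_nonpos_of_nonneg hc hs.le), zero_div]

end IsRegularlyVaryingAtZero

noncomputable def stieltjesSum (f g : ℝ → ℝ) (m : ℕ) (θ : ℝ) : ℝ :=
  ∑ k ∈ Finset.range m, f ((k + θ) / m) * (g ((k + 1) / m) - g (k / m))

section stieltjesSum

variable {f g : ℝ → ℝ} {m : ℕ} {θ : ℝ}

lemma natCast_add_div_mem_Icc {k : ℕ} (hk : k < m) {t : ℝ} (ht : t ∈ Icc (0 : ℝ) 1) :
    ((k : ℝ) + t) / m ∈ Icc (0 : ℝ) 1 := by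
  have hm : (0 : ℝ) < m := by exact_mod_cast (k.zero_le.trans_lt hk)
  have hkm : (k : ℝ) + 1 ≤ m := by exact_mod_cast hk
  constructor
  · exact div_nonneg (by linarith [ht.1, (k.cast_nonneg : (0 : ℝ) ≤ k)]) hm.le
  · rw [div_le_one hm]; linarith [ht.2]

lemma natCast_div_mem_Icc {k : ℕ} (hk : k < m) : (k : ℝ) / m ∈ Icc (0 : ℝ) 1 := by
  simpa using natCast_add_div_mem_Icc hk (left_mem_Icc.2 zero_le_one)

lemma natCast_succ_div_mem_Icc {k : ℕ} (hk : k < m) : ((k : ℝ) + 1) / m ∈ Icc (0 : ℝ) 1 :=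
  natCast_add_div_mem_Icc hk (right_mem_Icc.2 zero_le_one)

lemma stieltjesSum_mul_mul (c d : ℝ) :
    stieltjesSum (fun x => c * f x) (fun x => d * g x) m θ = c * d * stieltjesSum f g m θ := by
  rw [stieltjesSum, stieltjesSum, Finset.mul_sum]
  exact Finset.sum_congr rfl fun _ _ => by ring

lemma Filter.Tendsto.stieltjesSum {ι : Type*} {l : Filter ι} {f g : ι → ℝ → ℝ}
    {f₀ g₀ : ℝ → ℝ} (hf : ∀ x, Tendsto (f · x) l (𝓝 (f₀ x)))
    (hg : ∀ x, Tendsto (g · x) l (𝓝 (g₀ x))) (m : ℕ) (θ : ℝ) :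
    Tendsto (fun i => stieltjesSum (f i) (g i) m θ) l (𝓝 (stieltjesSum f₀ g₀ m θ)) :=
  tendsto_finsetSum _ fun _ _ => (hf _).mul ((hg _).sub (hg _))

lemma stieltjesSum_rpowPos_zero (f : ℝ → ℝ) (hm : m ≠ 0) (θ : ℝ) :
    stieltjesSum f (rpowPos 0) m θ = f (θ / m) := by
  have hm' : (0 : ℝ) < m := by positivity
  rw [stieltjesSum, Finset.sum_eq_single_of_mem 0 (Finset.mem_range.2 (Nat.pos_of_ne_zero hm))]
  · rw [rpowPos_of_pos (by positivity), rpowPos_of_nonpos (by simp)]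
    simp
  · intro k _ hk
    have hk' : (0 : ℝ) < k := by exact_mod_cast Nat.pos_of_ne_zero hk
    rw [rpowPos_of_pos (by positivity), rpowPos_of_pos (by positivity)]
    simp

lemma stieltjesSum_le_of_le (hf : AntitoneOn f (Icc 0 1)) (hg : MonotoneOn g (Icc 0 1)) {θ' : ℝ}
    (hθ : 0 ≤ θ) (hθθ' : θ ≤ θ') (hθ' : θ' ≤ 1) :
    stieltjesSum f g m θ' ≤ stieltjesSum f g m θ := by
  refine Finset.sum_le_sum fun k hk => ?_
  have hk := Finset.mem_range.1 hk
  refine mul_le_mul_of_nonneg_right ?_ (sub_nonneg.2 <|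
    hg (natCast_div_mem_Icc hk) (natCast_succ_div_mem_Icc hk) (by gcongr; linarith))
  exact hf (natCast_add_div_mem_Icc hk ⟨hθ, hθθ'.trans hθ'⟩)
    (natCast_add_div_mem_Icc hk ⟨hθ.trans hθθ', hθ'⟩) (by gcongr)

lemma stieltjesSum_zero_sub_one_le (hf : AntitoneOn f (Icc 0 1)) (hm : m ≠ 0) {ε : ℝ}
    (hg : ∀ k < m, g ((k + 1) / m) - g (k / m) ∈ Icc 0 ε) :
    stieltjesSum f g m 0 - stieltjesSum f g m 1 ≤ (f 0 - f 1) * ε := by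
  have hm' : (m : ℝ) ≠ 0 := by positivity
  calc stieltjesSum f g m 0 - stieltjesSum f g m 1
      = ∑ k ∈ Finset.range m, (f (k / m) - f ((k + 1) / m)) * (g ((k + 1) / m) - g (k / m)) := by
        rw [stieltjesSum, stieltjesSum, ← Finset.sum_sub_distrib]
        simp only [add_zero, sub_mul]
    _ ≤ ∑ k ∈ Finset.range m, (f (k / m) - f ((k + 1) / m)) * ε := by
        refine Finset.sum_le_sum fun k hk => ?_
        have hk := Finset.mem_range.1 hk
        exact mul_le_mul_of_nonneg_left (hg k hk).2 <| sub_nonneg.2 <|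
          hf (natCast_div_mem_Icc hk) (natCast_succ_div_mem_Icc hk) (by gcongr; linarith)
    _ = (f 0 - f 1) * ε := by
        rw [← Finset.sum_mul]
        have := Finset.sum_range_sub' (fun k : ℕ => f (k / m)) m
        push_cast at this
        rw [this, zero_div, div_self hm']

lemma tendsto_stieltjesSum_zero_sub_one (hf : AntitoneOn f (Icc 0 1))
    (hg : MonotoneOn g (Icc 0 1)) (hgc : ContinuousOn g (Icc 0 1)) :
    Tendsto (fun m => stieltjesSum f g m 0 - stieltjesSum f g m 1) atTop (𝓝 0) := by
  have hf01 : 0 ≤ f 0 - f 1 := sub_nonneg.2 <| hf (left_mem_Icc.2 zero_le_one)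
    (right_mem_Icc.2 zero_le_one) zero_le_one
  rw [Metric.tendsto_atTop]
  intro ε hε
  have hε' : 0 < ε / (f 0 - f 1 + 1) := by positivity
  obtain ⟨δ, hδ, hgδ⟩ := Metric.uniformContinuousOn_iff.1
    (isCompact_Icc.uniformContinuousOn_of_continuous hgc) _ hε'
  obtain ⟨N, hN⟩ := exists_nat_one_div_lt hδ
  refine ⟨N + 1, fun m hm => ?_⟩
  have hm0 : m ≠ 0 := by omega
  have hmpos : (0 : ℝ) < m := by positivity
  have hΔ : ∀ k < m, g ((k + 1) / m) - g (k / m) ∈ Icc 0 (ε / (f 0 - f 1 + 1)) := by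
    intro k hk
    have hle : g (k / m) ≤ g ((k + 1) / m) :=
      hg (natCast_div_mem_Icc hk) (natCast_succ_div_mem_Icc hk) (by gcongr; linarith)
    have hdist : dist (((k : ℝ) + 1) / m) (k / m) < δ := by
      rw [Real.dist_eq, ← sub_div, add_sub_cancel_left, abs_of_pos (by positivity)]
      calc 1 / (m : ℝ) ≤ 1 / ((N : ℝ) + 1) := by
            gcongr; exact_mod_cast hm
        _ < δ := hN
    have := hgδ _ (natCast_succ_div_mem_Icc hk) _ (natCast_div_mem_Icc hk) hdist
    rw [Real.dist_eq, abs_of_nonneg (sub_nonneg.2 hle)] at this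
    exact ⟨sub_nonneg.2 hle, this.le⟩
  have hlo : 0 ≤ stieltjesSum f g m 0 - stieltjesSum f g m 1 :=
    sub_nonneg.2 (stieltjesSum_le_of_le hf hg le_rfl zero_le_one le_rfl)
  rw [Real.dist_eq, sub_zero, abs_of_nonneg hlo]
  calc _ ≤ (f 0 - f 1) * (ε / (f 0 - f 1 + 1)) := stieltjesSum_zero_sub_one_le hf hm0 hΔ
    _ < ε := by
      rw [mul_div_assoc', div_lt_iff₀ (by positivity)]
      nlinarith

lemma tendsto_stieltjesSum (hf : AntitoneOn f (Icc 0 1)) (hg : MonotoneOn g (Icc 0 1))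
    (hgc : ContinuousOn g (Icc 0 1)) {I : ℝ}
    (hI : ∀ m ≠ 0, I ∈ Icc (stieltjesSum f g m 1) (stieltjesSum f g m 0)) {θ : ℝ}
    (hθ : θ ∈ Icc (0 : ℝ) 1) :
    Tendsto (stieltjesSum f g · θ) atTop (𝓝 I) := by
  have hD := tendsto_stieltjesSum_zero_sub_one hf hg hgc
  refine tendsto_of_tendsto_of_tendsto_of_le_of_le' (by simpa using tendsto_const_nhds.sub hD)
    (by simpa using tendsto_const_nhds.add hD) ?_ ?_
  all_goals
    filter_upwards [eventually_ne_atTop 0] with m hm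
    have h0 := stieltjesSum_le_of_le (m := m) hf hg le_rfl hθ.1 hθ.2
    have h1 := stieltjesSum_le_of_le (m := m) hf hg hθ.1 hθ.2 le_rfl
    linarith [(hI m hm).1, (hI m hm).2]

end stieltjesSum

section RiemannStieltjesIntegral

variable {f g g' : ℝ → ℝ}

lemma integral_mul_mem_Icc {a b : ℝ} (hab : a ≤ b) (hf : AntitoneOn f (Icc a b))
    (hg' : ∀ x ∈ Icc a b, 0 ≤ g' x) (hg'i : IntervalIntegrable g' volume a b)
    (hfg'i : IntervalIntegrable (fun x => f x * g' x) volume a b)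
    (hg : ∫ x in a..b, g' x = g b - g a) :
    ∫ x in a..b, f x * g' x ∈ Icc (f b * (g b - g a)) (f a * (g b - g a)) := by
  rw [← hg, ← intervalIntegral.integral_const_mul, ← intervalIntegral.integral_const_mul]
  refine ⟨intervalIntegral.integral_mono_on hab (hg'i.const_mul _) hfg'i fun x hx => ?_,
    intervalIntegral.integral_mono_on hab hfg'i (hg'i.const_mul _) fun x hx => ?_⟩
  · exact mul_le_mul_of_nonneg_right (hf hx (right_mem_Icc.2 hab) hx.2) (hg' x hx)
  · exact mul_le_mul_of_nonneg_right (hf (left_mem_Icc.2 hab) hx hx.1) (hg' x hx)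

lemma integral_mul_mem_Icc_stieltjesSum (hf : AntitoneOn f (Icc 0 1))
    (hg' : ∀ x ∈ Icc 0 1, 0 ≤ g' x) (hg'i : IntervalIntegrable g' volume 0 1)
    (hfg'i : IntervalIntegrable (fun x => f x * g' x) volume 0 1)
    (hg : ∀ x ∈ Icc (0 : ℝ) 1, ∀ y ∈ Icc (0 : ℝ) 1, ∫ t in x..y, g' t = g y - g x)
    {m : ℕ} (hm : m ≠ 0) :
    ∫ x in (0 : ℝ)..1, f x * g' x ∈ Icc (stieltjesSum f g m 1) (stieltjesSum f g m 0) := by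
  have hm' : (m : ℝ) ≠ 0 := by positivity
  have hsub : ∀ k < m, uIcc ((k : ℝ) / m) ((k + 1) / m) ⊆ uIcc 0 1 := fun k hk =>
    uIcc_subset_uIcc (Icc_subset_uIcc (natCast_div_mem_Icc hk))
      (Icc_subset_uIcc (natCast_succ_div_mem_Icc hk))
  have hsplit := intervalIntegral.sum_integral_adjacent_intervals (a := fun k : ℕ => (k : ℝ) / m)
    (n := m) (f := fun x => f x * g' x) (μ := volume) fun k hk => by
      simpa using hfg'i.mono_set (by simpa using hsub k hk)
  simp only [Nat.cast_zero, zero_div, div_self hm', Nat.cast_add, Nat.cast_one] at hsplit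
  rw [← hsplit, stieltjesSum, stieltjesSum]
  have hterm := fun k (hk : k ∈ Finset.range m) => by
    have hk := Finset.mem_range.1 hk
    exact integral_mul_mem_Icc (f := f) (g := g) (by gcongr; linarith)
      (hf.mono (Icc_subset_Icc (natCast_div_mem_Icc hk).1 (natCast_succ_div_mem_Icc hk).2))
      (fun x hx => hg' x ⟨(natCast_div_mem_Icc hk).1.trans hx.1,
        hx.2.trans (natCast_succ_div_mem_Icc hk).2⟩)
      (hg'i.mono_set (hsub k hk)) (hfg'i.mono_set (hsub k hk))
      (hg _ (natCast_div_mem_Icc hk) _ (natCast_succ_div_mem_Icc hk))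
  simp only [add_zero]
  exact ⟨Finset.sum_le_sum fun k hk => (hterm k hk).1, Finset.sum_le_sum fun k hk => (hterm k hk).2⟩

end RiemannStieltjesIntegral

lemma integral_rpow_mul_one_sub_rpow {u v : ℝ} (hu : 0 < u) (hv : 0 < v) :
    ∫ x in (0 : ℝ)..1, x ^ (u - 1) * (1 - x) ^ (v - 1) =
      Real.Gamma u * Real.Gamma v / Real.Gamma (u + v) := by
  apply Complex.ofReal_injective
  push_cast
  rw [← Complex.Gamma_ofReal, ← Complex.Gamma_ofReal, ← Complex.Gamma_ofReal, Complex.ofReal_add,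
    ← Complex.betaIntegral_eq_Gamma_mul_div _ _ (by simpa) (by simpa), Complex.betaIntegral,
    ← intervalIntegral.integral_ofReal]
  refine intervalIntegral.integral_congr fun x hx => ?_
  rw [uIcc_of_le zero_le_one] at hx
  rw [Complex.ofReal_mul, Complex.ofReal_cpow hx.1, Complex.ofReal_cpow (sub_nonneg.2 hx.2)]
  push_cast
  ring

section BetaStieltjes

variable {γ₁ γ₂ : ℝ}

lemma integral_rpowPos_one_sub_mul (hγ₁ : 0 ≤ γ₁) (hγ₂ : 0 < γ₂) :
    IntervalIntegrable (fun x => rpowPos γ₁ (1 - x) * (γ₂ * x ^ (γ₂ - 1))) volume 0 1 ∧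
      ∫ x in (0 : ℝ)..1, rpowPos γ₁ (1 - x) * (γ₂ * x ^ (γ₂ - 1)) =
        Real.Gamma (γ₁ + 1) * Real.Gamma (γ₂ + 1) / Real.Gamma (γ₁ + γ₂ + 1) := by
  have heq : EqOn (fun x => (1 - x) ^ γ₁ * (γ₂ * x ^ (γ₂ - 1)))
      (fun x => rpowPos γ₁ (1 - x) * (γ₂ * x ^ (γ₂ - 1))) (uIoo 0 1) := fun x hx => by
    rw [uIoo_of_le zero_le_one] at hx
    simp only [rpowPos_of_pos (sub_pos.2 hx.2)]
  have hint : IntervalIntegrable (fun x => (1 - x) ^ γ₁ * (γ₂ * x ^ (γ₂ - 1))) volume 0 1 :=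
    ((intervalIntegral.intervalIntegrable_rpow' (by linarith)).const_mul γ₂).continuousOn_mul
      (by fun_prop (disch := intros; exact Or.inr hγ₁))
  refine ⟨hint.congr_uIoo heq, ?_⟩
  rw [← intervalIntegral.integral_congr_uIoo heq]
  calc ∫ x in (0 : ℝ)..1, (1 - x) ^ γ₁ * (γ₂ * x ^ (γ₂ - 1))
      = γ₂ * ∫ x in (0 : ℝ)..1, x ^ (γ₂ - 1) * (1 - x) ^ (γ₁ + 1 - 1) := by
        rw [← intervalIntegral.integral_const_mul]
        congr 1 with x
        rw [add_sub_cancel_right]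
        ring
    _ = _ := by
        rw [integral_rpow_mul_one_sub_rpow hγ₂ (by linarith), Real.Gamma_add_one hγ₂.ne',
          add_comm γ₂, add_right_comm γ₁ 1 γ₂]
        ring

lemma beta_mem_Icc_stieltjesSum (hγ₁ : 0 ≤ γ₁) (hγ₂ : 0 < γ₂) {m : ℕ} (hm : m ≠ 0) :
    Real.Gamma (γ₁ + 1) * Real.Gamma (γ₂ + 1) / Real.Gamma (γ₁ + γ₂ + 1) ∈
      Icc (stieltjesSum (fun x => rpowPos γ₁ (1 - x)) (rpowPos γ₂) m 1)
        (stieltjesSum (fun x => rpowPos γ₁ (1 - x)) (rpowPos γ₂) m 0) := by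
  obtain ⟨hint, hval⟩ := integral_rpowPos_one_sub_mul hγ₁ hγ₂
  rw [← hval]
  refine integral_mul_mem_Icc_stieltjesSum
    (fun x _ y _ hxy => monotone_rpowPos hγ₁ (by linarith))
    (fun x hx => mul_nonneg hγ₂.le (Real.rpow_nonneg hx.1 _))
    ((intervalIntegral.intervalIntegrable_rpow' (by linarith)).const_mul γ₂) hint
    (fun x hx y hy => ?_) hm
  rw [intervalIntegral.integral_const_mul, integral_rpow (Or.inl (by linarith)),
    sub_add_cancel, eqOn_rpowPos hγ₂.ne' hx.1, eqOn_rpowPos hγ₂.ne' hy.1]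
  field_simp

theorem tendsto_stieltjesSum_rpowPos (hγ₁ : 0 ≤ γ₁) (hγ₂ : 0 ≤ γ₂) {θ : ℝ}
    (hθ : θ ∈ Icc (0 : ℝ) 1) :
    Tendsto (stieltjesSum (fun x => rpowPos γ₁ (1 - x)) (rpowPos γ₂) · θ) atTop
      (𝓝 (Real.Gamma (γ₁ + 1) * Real.Gamma (γ₂ + 1) / Real.Gamma (γ₁ + γ₂ + 1))) := by
  rcases hγ₂.eq_or_lt with rfl | hγ₂
  · rw [zero_add, Real.Gamma_one, mul_one, add_zero, div_self (Real.Gamma_pos_of_pos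
      (by linarith)).ne']
    have hlim : Tendsto (fun m : ℕ => rpowPos γ₁ (1 - θ / m)) atTop (𝓝 1) := by
      have h1 : rpowPos γ₁ 1 = 1 := by rw [rpowPos_of_pos one_pos, Real.one_rpow]
      have h0 : Tendsto (fun m : ℕ => 1 - θ / m) atTop (𝓝 1) := by
        simpa using tendsto_const_nhds.sub (tendsto_const_div_atTop_nhds_zero_nat θ)
      have := (continuousAt_rpowPos (γ := γ₁) one_pos).tendsto.comp h0
      rwa [h1] at this
    refine hlim.congr' ?_
    filter_upwards [eventually_ne_atTop 0] with m hm
    exact (stieltjesSum_rpowPos_zero (fun x => rpowPos γ₁ (1 - x)) hm θ).symm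
  · exact tendsto_stieltjesSum (fun x _ y _ hxy => monotone_rpowPos hγ₁ (by linarith))
      ((monotone_rpowPos hγ₂.le).monotoneOn _)
      ((continuousOn_rpowPos hγ₂).mono fun x hx => hx.1)
      (fun m hm => beta_mem_Icc_stieltjesSum hγ₁ hγ₂ hm) hθ

end BetaStieltjes

lemma tendsto_of_squeeze_family {α ι β : Type*} [TopologicalSpace β] [LinearOrder β]
    [OrderTopology β] {l : Filter α} {l' : Filter ι} [l'.NeBot] {R : α → β} {L U : ι → α → β}
    {a b : ι → β} {c : β} (hLU : ∀ᶠ i in l', ∀ᶠ s in l, R s ∈ Icc (L i s) (U i s))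
    (hL : ∀ᶠ i in l', Tendsto (L i) l (𝓝 (a i))) (hU : ∀ᶠ i in l', Tendsto (U i) l (𝓝 (b i)))
    (ha : Tendsto a l' (𝓝 c)) (hb : Tendsto b l' (𝓝 c)) :
    Tendsto R l (𝓝 c) := by
  refine tendsto_order.2 ⟨fun c' hc' => ?_, fun c' hc' => ?_⟩
  · obtain ⟨i, hi, hLi, hai⟩ := (hLU.and (hL.and (ha.eventually (lt_mem_nhds hc')))).exists
    filter_upwards [hi, hLi.eventually (lt_mem_nhds hai)] with s hs hs' using hs'.trans_le hs.1
  · obtain ⟨i, hi, hUi, hbi⟩ := (hLU.and (hU.and (hb.eventually (gt_mem_nhds hc')))).exists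
    filter_upwards [hi, hUi.eventually (gt_mem_nhds hbi)] with s hs hs' using hs.2.trans_lt hs'

theorem tendsto_div_mul_of_mem_Icc_stieltjesSum {G₁ G₂ H : ℝ → ℝ} {γ₁ γ₂ a b : ℝ}
    (hγ₁ : 0 ≤ γ₁) (hγ₂ : 0 ≤ γ₂) (ha : 0 < a) (hb : 0 < b)
    (hG₁ : IsRegularlyVaryingAtZero G₁ γ₁) (hG₂ : IsRegularlyVaryingAtZero G₂ γ₂)
    (hG₁0 : ∀ x ≤ 0, G₁ x = 0) (hG₂0 : ∀ x ≤ 0, G₂ x = 0) (hG₁nn : 0 ≤ G₁) (hG₂nn : 0 ≤ G₂)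
    (hH : ∀ m ≠ 0, ∀ s > 0, H s ∈
      Icc (stieltjesSum (fun x => G₁ ((1 - x) * s / a)) (fun x => G₂ (x * s / b)) m 1)
        (stieltjesSum (fun x => G₁ ((1 - x) * s / a)) (fun x => G₂ (x * s / b)) m 0)) :
    Tendsto (fun s => H s / (G₁ s * G₂ s)) (𝓝[>] 0)
      (𝓝 (a ^ (-γ₁) * b ^ (-γ₂) *
        (Real.Gamma (γ₁ + 1) * Real.Gamma (γ₂ + 1) / Real.Gamma (γ₁ + γ₂ + 1)))) := by
  set L : ℝ → ℕ → ℝ → ℝ := fun θ m s =>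
    stieltjesSum (fun x => G₁ ((1 - x) * s / a) / G₁ s) (fun x => G₂ (x * s / b) / G₂ s) m θ
  have hL : ∀ θ m s, L θ m s =
      stieltjesSum (fun x => G₁ ((1 - x) * s / a)) (fun x => G₂ (x * s / b)) m θ /
        (G₁ s * G₂ s) := fun θ m s => by
    simp only [L, div_eq_inv_mul, stieltjesSum_mul_mul, mul_inv]
  have hlim : ∀ θ m, Tendsto (L θ m) (𝓝[>] 0) (𝓝 (a ^ (-γ₁) * b ^ (-γ₂) *
      stieltjesSum (fun x => rpowPos γ₁ (1 - x)) (rpowPos γ₂) m θ)) := fun θ m => by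
    rw [← stieltjesSum_mul_mul]
    simp only [← rpowPos_div ha, ← rpowPos_div hb]
    refine Tendsto.stieltjesSum (fun x => ?_) (fun x => ?_) m θ
    · simpa only [div_mul_eq_mul_div] using hG₁.tendsto_div_rpowPos hG₁0 ((1 - x) / a)
    · simpa only [div_mul_eq_mul_div] using hG₂.tendsto_div_rpowPos hG₂0 (x / b)
  refine tendsto_of_squeeze_family (L := L 1) (U := L 0) ?_ (.of_forall (hlim 1))
    (.of_forall (hlim 0))
    ((tendsto_stieltjesSum_rpowPos hγ₁ hγ₂ (right_mem_Icc.2 zero_le_one)).const_mul _)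
    ((tendsto_stieltjesSum_rpowPos hγ₁ hγ₂ (left_mem_Icc.2 zero_le_one)).const_mul _)
  filter_upwards [eventually_ne_atTop 0] with m hm
  filter_upwards [self_mem_nhdsWithin] with s (hs : 0 < s)
  have hG : 0 ≤ G₁ s * G₂ s := mul_nonneg (hG₁nn s) (hG₂nn s)
  rw [hL, hL]
  exact ⟨div_le_div_of_nonneg_right (hH m hm s hs).1 hG,
    div_le_div_of_nonneg_right (hH m hm s hs).2 hG⟩

section Slicing

variable {Ω : Type*} [MeasurableSpace Ω] {μ : Measure Ω} {X Y : Ω → ℝ}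

lemma ProbabilityTheory.IndepFun.measureReal_inter_preimage_eq_mul {β γ : Type*}
    [MeasurableSpace β] [MeasurableSpace γ] {X : Ω → β} {Y : Ω → γ} (hXY : IndepFun X Y μ)
    {A : Set β} {B : Set γ} (hA : MeasurableSet A) (hB : MeasurableSet B) :
    μ.real (X ⁻¹' A ∩ Y ⁻¹' B) = μ.real (X ⁻¹' A) * μ.real (Y ⁻¹' B) := by
  simp only [measureReal_def, hXY.measure_inter_preimage_eq_mul _ _ hA hB, ENNReal.toReal_mul]

variable [IsFiniteMeasure μ]

lemma measureReal_preimage_Ico (hY : Measurable Y) {u v : ℝ} (huv : u ≤ v) :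
    μ.real (Y ⁻¹' Ico u v) = μ.real {ω | Y ω < v} - μ.real {ω | Y ω < u} := by
  have : Y ⁻¹' Ico u v = {ω | Y ω < v} \ {ω | Y ω < u} := by
    ext ω
    simp [and_comm]
  rw [this]
  exact measureReal_sdiff (fun ω (h : Y ω < u) => h.trans_le huv)
    (measurableSet_lt hY measurable_const)

lemma sum_measureReal_mul_le_measureReal_add_lt (hX : Measurable X) (hY : Measurable Y)
    (hXY : IndepFun X Y μ) {y : ℕ → ℝ} (hy : Monotone y) (s : ℝ) (m : ℕ) :
    ∑ k ∈ Finset.range m,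
        μ.real {ω | X ω < s - y (k + 1)} * μ.real (Y ⁻¹' Ico (y k) (y (k + 1))) ≤
      μ.real {ω | X ω + Y ω < s} := by
  let slab k := X ⁻¹' Iio (s - y (k + 1)) ∩ Y ⁻¹' Ico (y k) (y (k + 1))
  calc _ = μ.real (⋃ k ∈ Finset.range m, slab k) := by
        rw [measureReal_biUnion_finset (f := slab)
          (fun i _ j _ hij => ((hy.pairwise_disjoint_on_Ico_succ hij).preimage Y).mono
            inter_subset_right inter_subset_right)
          (fun k _ => (hX measurableSet_Iio).inter (hY measurableSet_Ico))]
        exact Finset.sum_congr rfl fun k _ =>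
          (hXY.measureReal_inter_preimage_eq_mul measurableSet_Iio measurableSet_Ico).symm
    _ ≤ μ.real {ω | X ω + Y ω < s} := by
        refine measureReal_mono (iUnion₂_subset fun k _ ω ⟨hXω, _, hYω⟩ => ?_)
        change X ω < s - y (k + 1) at hXω
        change X ω + Y ω < s
        linarith

lemma measureReal_add_lt_le_sum_mul (hXY : IndepFun X Y μ) {y : ℕ → ℝ} {s : ℝ} {m : ℕ}
    (hcover : ∀ ω, X ω + Y ω < s → Y ω ∈ Ico (y 0) (y m)) :
    μ.real {ω | X ω + Y ω < s} ≤
      ∑ k ∈ Finset.range m,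
        μ.real {ω | X ω < s - y k} * μ.real (Y ⁻¹' Ico (y k) (y (k + 1))) := by
  calc μ.real {ω | X ω + Y ω < s}
      ≤ μ.real (⋃ k ∈ Finset.range m, X ⁻¹' Iio (s - y k) ∩ Y ⁻¹' Ico (y k) (y (k + 1))) := by
        refine measureReal_mono (fun ω (hω : X ω + Y ω < s) => ?_) (measure_ne_top _ _)
        obtain ⟨k, hk, hYk⟩ := mem_iUnion₂.1 (Ico_subset_biUnion_Ico m y (hcover ω hω))
        exact mem_biUnion hk ⟨show X ω < s - y k by linarith [hYk.1], hYk⟩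
    _ ≤ _ := measureReal_biUnion_finset_le _ _
    _ = _ := Finset.sum_congr rfl fun k _ =>
        hXY.measureReal_inter_preimage_eq_mul measurableSet_Iio measurableSet_Ico

lemma measureReal_add_lt_mem_Icc_stieltjesSum (hX : Measurable X) (hY : Measurable Y)
    (hXY : IndepFun X Y μ) (hX0 : ∀ ω, 0 ≤ X ω) (hY0 : ∀ ω, 0 ≤ Y ω) {s : ℝ} (hs : 0 ≤ s)
    {m : ℕ} (hm : m ≠ 0) :
    μ.real {ω | X ω + Y ω < s} ∈
      Icc (stieltjesSum (fun x => μ.real {ω | X ω < (1 - x) * s})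
          (fun x => μ.real {ω | Y ω < x * s}) m 1)
        (stieltjesSum (fun x => μ.real {ω | X ω < (1 - x) * s})
          (fun x => μ.real {ω | Y ω < x * s}) m 0) := by
  set y : ℕ → ℝ := fun k => k / m * s
  have hy : Monotone y := fun i j hij => by dsimp only [y]; gcongr
  have hslice : ∀ k, μ.real (Y ⁻¹' Ico (y k) (y (k + 1))) =
      μ.real {ω | Y ω < (k + 1) / m * s} - μ.real {ω | Y ω < k / m * s} := fun k => by
    rw [measureReal_preimage_Ico hY (hy k.le_succ)]
    push_cast [y]
    rfl
  constructor
  · refine le_of_eq_of_le (Finset.sum_congr rfl fun k _ => ?_)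
      (sum_measureReal_mul_le_measureReal_add_lt hX hY hXY hy s m)
    rw [hslice]
    simp only [y, Nat.cast_add, Nat.cast_one, sub_mul, one_mul]
  · refine (measureReal_add_lt_le_sum_mul (y := y) hXY fun ω hω => ⟨?_, ?_⟩).trans_eq
      (Finset.sum_congr rfl fun k _ => ?_)
    · simpa [y] using hY0 ω
    · simp only [y, div_self (Nat.cast_ne_zero.2 hm : (m : ℝ) ≠ 0), one_mul]
      linarith [hX0 ω]
    · rw [hslice]
      simp only [y, sub_mul, one_mul, add_zero]

end Slicing

theorem tendsto_measureReal_add_lt_div_mul {Ω : Type*} [MeasurableSpace Ω] {μ : Measure Ω}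
    [IsFiniteMeasure μ] {X Y : Ω → ℝ} (hX : Measurable X) (hY : Measurable Y)
    (hXY : IndepFun X Y μ) (hX0 : ∀ ω, 0 ≤ X ω) (hY0 : ∀ ω, 0 ≤ Y ω) {γ₁ γ₂ a b : ℝ}
    (hγ₁ : 0 ≤ γ₁) (hγ₂ : 0 ≤ γ₂) (ha : 0 < a) (hb : 0 < b)
    (hXγ : IsRegularlyVaryingAtZero (fun t => μ.real {ω | X ω < t}) γ₁)
    (hYγ : IsRegularlyVaryingAtZero (fun t => μ.real {ω | Y ω < t}) γ₂) :
    Tendsto (fun s => μ.real {ω | a * X ω + b * Y ω < s} /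
        (μ.real {ω | X ω < s} * μ.real {ω | Y ω < s})) (𝓝[>] 0)
      (𝓝 (a ^ (-γ₁) * b ^ (-γ₂) *
        (Real.Gamma (γ₁ + 1) * Real.Gamma (γ₂ + 1) / Real.Gamma (γ₁ + γ₂ + 1)))) := by
  have hscale : ∀ {Z : Ω → ℝ} {c : ℝ}, 0 < c → ∀ t,
      μ.real {ω | c * Z ω < t} = μ.real {ω | Z ω < t / c} := fun hc t => by
    simp_rw [lt_div_iff₀' hc]
  have hvanish : ∀ {Z : Ω → ℝ}, (∀ ω, 0 ≤ Z ω) → ∀ x ≤ 0, μ.real {ω | Z ω < x} = 0 :=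
    fun hZ x hx => by simp [fun ω => not_lt.2 (hx.trans (hZ ω))]
  refine tendsto_div_mul_of_mem_Icc_stieltjesSum hγ₁ hγ₂ ha hb hXγ hYγ (hvanish hX0)
    (hvanish hY0) (fun _ => measureReal_nonneg) (fun _ => measureReal_nonneg) fun m hm s hs => ?_
  simpa only [hscale ha, hscale hb] using measureReal_add_lt_mem_Icc_stieltjesSum
    (hX.const_mul a) (hY.const_mul b) (hXY.comp (measurable_const_mul a) (measurable_const_mul b))
    (fun ω => mul_nonneg ha.le (hX0 ω)) (fun ω => mul_nonneg hb.le (hY0 ω)) (le_of_lt hs) hm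

lemma IsRegularlyVaryingAtZero.measureReal_one_sub_lt {Ω : Type*} [MeasurableSpace Ω]
    {μ : Measure Ω} {S : Ω → ℝ} {γ : ℝ}
    (h : ∀ t > 0, Tendsto (fun x : ℝ =>
      (μ {ω | S ω > 1 - t / x}).toReal / (μ {ω | S ω > 1 - 1 / x}).toReal) atTop (𝓝 (t ^ γ))) :
    IsRegularlyVaryingAtZero (fun t => μ.real {ω | 1 - S ω < t}) γ := by
  simp_rw [sub_lt_comm (a := (1 : ℝ))]
  exact .of_tendsto_atTop h

theorem two_risk_weighted_sum_tail_at_one_general {Ω : Type*} [MeasurableSpace Ω] (μ : Measure Ω)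
    [IsProbabilityMeasure μ] (S₁ S₂ : Ω → ℝ) (hm₁ : Measurable S₁) (hm₂ : Measurable S₂)
    (hrange₁ : ∀ ω, S₁ ω ∈ Set.Icc (0 : ℝ) 1) (hrange₂ : ∀ ω, S₂ ω ∈ Set.Icc (0 : ℝ) 1)
    (hind : IndepFun S₁ S₂ μ)
    (γ₁ γ₂ : ℝ) (hγ₁ : 0 ≤ γ₁) (hγ₂ : 0 ≤ γ₂)
    (hreg₁ : ∀ t > 0, Tendsto (fun x : ℝ =>
        (μ {ω | S₁ ω > 1 - t / x}).toReal / (μ {ω | S₁ ω > 1 - 1 / x}).toReal)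
        atTop (𝓝 (t ^ γ₁)))
    (hreg₂ : ∀ t > 0, Tendsto (fun x : ℝ =>
        (μ {ω | S₂ ω > 1 - t / x}).toReal / (μ {ω | S₂ ω > 1 - 1 / x}).toReal)
        atTop (𝓝 (t ^ γ₂)))
    (lam : ℝ) (hlam : lam ∈ Set.Ioo (0 : ℝ) 1) :
    Tendsto (fun u : ℝ =>
        (μ {ω | lam * S₁ ω + (1 - lam) * S₂ ω > u}).toReal /
          (lam ^ (-γ₁) * (1 - lam) ^ (-γ₂) *
            (Real.Gamma (γ₁ + 1) * Real.Gamma (γ₂ + 1) / Real.Gamma (γ₁ + γ₂ + 1)) *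
            ((μ {ω | S₁ ω > u}).toReal * (μ {ω | S₂ ω > u}).toReal)))
      (𝓝[<] (1 : ℝ)) (𝓝 1) := by
  obtain ⟨hl0, hl1⟩ := hlam
  have key := tendsto_measureReal_add_lt_div_mul (X := fun ω => 1 - S₁ ω)
    (Y := fun ω => 1 - S₂ ω) (measurable_const.sub hm₁) (measurable_const.sub hm₂)
    (hind.comp (measurable_const.sub measurable_id) (measurable_const.sub measurable_id))
    (fun ω => sub_nonneg.2 (hrange₁ ω).2) (fun ω => sub_nonneg.2 (hrange₂ ω).2) hγ₁ hγ₂ hl0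
    (sub_pos.2 hl1) (.measureReal_one_sub_lt hreg₁) (.measureReal_one_sub_lt hreg₂)
  set C := lam ^ (-γ₁) * (1 - lam) ^ (-γ₂) *
    (Real.Gamma (γ₁ + 1) * Real.Gamma (γ₂ + 1) / Real.Gamma (γ₁ + γ₂ + 1))
  have hC : 0 < C := by
    have := sub_pos.2 hl1
    positivity
  have hflip : Tendsto (fun u : ℝ => 1 - u) (𝓝[<] 1) (𝓝[>] 0) := by
    rw [Tendsto, Filter.map_subLeft_nhdsLT, sub_self]
  have := (key.comp hflip).div_const C
  rw [div_self hC.ne'] at this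
  refine this.congr fun u => ?_
  have hsum : {ω | lam * (1 - S₁ ω) + (1 - lam) * (1 - S₂ ω) < 1 - u} =
      {ω | lam * S₁ ω + (1 - lam) * S₂ ω > u} := by
    ext
    simp only [mem_ofPred_eq]
    constructor <;> intro h <;> linarith
  simp only [Function.comp_apply, hsum, sub_lt_sub_iff_left, measureReal_def, div_div, mul_comm]

/-- Two-risk case: P(λS₁ + (1−λ)S₂ > u) ∼
λ^{−γ₁}(1−λ)^{−γ₂}Γ(γ₁+1)Γ(γ₂+1)/Γ(γ₁+γ₂+1) · P(S₁ > u)P(S₂ > u) as u ↑ 1. -/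
theorem two_risk_weighted_sum_tail_at_one {Ω : Type*} [MeasurableSpace Ω] (μ : Measure Ω)
    [IsProbabilityMeasure μ] (S₁ S₂ : Ω → ℝ) (hm₁ : Measurable S₁) (hm₂ : Measurable S₂)
    (hrange₁ : ∀ ω, S₁ ω ∈ Set.Icc (0 : ℝ) 1) (hrange₂ : ∀ ω, S₂ ω ∈ Set.Icc (0 : ℝ) 1)
    (hendpoint₁ : ∀ u < 1, 0 < (μ {ω | S₁ ω > u}).toReal)
    (hendpoint₂ : ∀ u < 1, 0 < (μ {ω | S₂ ω > u}).toReal)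
    (hind : IndepFun S₁ S₂ μ)
    (γ₁ γ₂ : ℝ) (hγ₁ : 0 ≤ γ₁) (hγ₂ : 0 ≤ γ₂)
    (hreg₁ : ∀ t > 0, Tendsto (fun x : ℝ =>
        (μ {ω | S₁ ω > 1 - t / x}).toReal / (μ {ω | S₁ ω > 1 - 1 / x}).toReal)
        atTop (𝓝 (t ^ γ₁)))
    (hreg₂ : ∀ t > 0, Tendsto (fun x : ℝ =>
        (μ {ω | S₂ ω > 1 - t / x}).toReal / (μ {ω | S₂ ω > 1 - 1 / x}).toReal)
        atTop (𝓝 (t ^ γ₂)))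
    (lam : ℝ) (hlam : lam ∈ Set.Ioo (0 : ℝ) 1) :
    Tendsto (fun u : ℝ =>
        (μ {ω | lam * S₁ ω + (1 - lam) * S₂ ω > u}).toReal /
          (lam ^ (-γ₁) * (1 - lam) ^ (-γ₂) *
            (Real.Gamma (γ₁ + 1) * Real.Gamma (γ₂ + 1) / Real.Gamma (γ₁ + γ₂ + 1)) *
            ((μ {ω | S₁ ω > u}).toReal * (μ {ω | S₂ ω > u}).toReal)))
      (𝓝[<] (1 : ℝ)) (𝓝 1) :=
  two_risk_weighted_sum_tail_at_one_general μ S₁ S₂ hm₁ hm₂ hrange₁ hrange₂ hind γ₁ γ₂ hγ₁ hγ₂ hreg₁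
    hreg₂ lam hlam
end

section
/- Let λ₁, …, λₙ and λ₁*, …, λₙ* be nonnegative reals with Σᵢ λᵢ² = Σᵢ (λᵢ*)² = 1 and ϱ := Σᵢ λᵢλᵢ* < 1. Then the minimum of ‖s‖² = Σᵢ sᵢ² over the set {s ∈ ℝⁿ : Σᵢ λᵢsᵢ ≥ 1 and Σᵢ λᵢ*sᵢ ≥ 1} equals 2/(1+ϱ), and it is attained at the point with coordinates sᵢ = (λᵢ + λᵢ*)/(1+ϱ). -/
open Finset

/-!
For unit vectors `u, v` with `ρ = ⟪u, v⟫`, the vector `w = u + v` has `‖w‖² = 2 (1 + ρ)`, and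
every `s` in both half-spaces `⟪u, s⟫ ≥ 1`, `⟪v, s⟫ ≥ 1` has `⟪w, s⟫ ≥ 2`; Cauchy–Schwarz then
gives `4 ≤ ‖w‖² ‖s‖²`, i.e. `‖s‖² ≥ 2 / (1 + ρ)`. Equality holds at `s = w / (1 + ρ)`, which lies
on both boundary hyperplanes.
-/

section InnerProductSpace

open scoped RealInnerProductSpace

variable {E : Type*} [NormedAddCommGroup E] [InnerProductSpace ℝ E] {u v : E}

lemma norm_add_sq_of_norm_eq_one (hu : ‖u‖ = 1) (hv : ‖v‖ = 1) :
    ‖u + v‖ ^ 2 = 2 * (1 + ⟪u, v⟫) := by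
  rw [norm_add_sq_real, hu, hv]; ring

noncomputable def halfSpacesMinimizer (u v : E) : E := (1 + ⟪u, v⟫)⁻¹ • (u + v)

lemma halfSpacesMinimizer_comm (u v : E) : halfSpacesMinimizer u v = halfSpacesMinimizer v u := by
  rw [halfSpacesMinimizer, halfSpacesMinimizer, real_inner_comm, add_comm u v]

lemma inner_halfSpacesMinimizer_left (hu : ‖u‖ = 1) (hρ : 1 + ⟪u, v⟫ ≠ 0) :
    ⟪u, halfSpacesMinimizer u v⟫ = 1 := by
  rw [halfSpacesMinimizer, real_inner_smul_right, inner_add_right, real_inner_self_eq_norm_sq,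
    hu, one_pow, inv_mul_cancel₀ hρ]

lemma inner_halfSpacesMinimizer_right (hv : ‖v‖ = 1) (hρ : 1 + ⟪u, v⟫ ≠ 0) :
    ⟪v, halfSpacesMinimizer u v⟫ = 1 :=
  halfSpacesMinimizer_comm v u ▸ inner_halfSpacesMinimizer_left hv (real_inner_comm u v ▸ hρ)

lemma norm_halfSpacesMinimizer_sq (hu : ‖u‖ = 1) (hv : ‖v‖ = 1) (hρ : 1 + ⟪u, v⟫ ≠ 0) :
    ‖halfSpacesMinimizer u v‖ ^ 2 = 2 / (1 + ⟪u, v⟫) := by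
  rw [halfSpacesMinimizer, norm_smul, mul_pow, norm_add_sq_of_norm_eq_one hu hv,
    Real.norm_eq_abs, sq_abs]
  field_simp

lemma div_one_add_inner_le_norm_sq (hu : ‖u‖ = 1) (hv : ‖v‖ = 1) (hρ : 0 < 1 + ⟪u, v⟫)
    {s : E} (hus : 1 ≤ ⟪u, s⟫) (hvs : 1 ≤ ⟪v, s⟫) :
    2 / (1 + ⟪u, v⟫) ≤ ‖s‖ ^ 2 := by
  have h2 : 2 ≤ ‖u + v‖ * ‖s‖ :=
    calc (2 : ℝ) ≤ ⟪u + v, s⟫ := by rw [inner_add_left]; linarith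
      _ ≤ ‖u + v‖ * ‖s‖ := real_inner_le_norm _ _
  have h4 : 4 ≤ 2 * (1 + ⟪u, v⟫) * ‖s‖ ^ 2 := by
    rw [← norm_add_sq_of_norm_eq_one hu hv, ← mul_pow]; nlinarith
  rw [div_le_iff₀ hρ]; linarith

theorem isLeast_norm_sq_inter_halfSpaces (hu : ‖u‖ = 1) (hv : ‖v‖ = 1) (hρ : 0 < 1 + ⟪u, v⟫) :
    IsLeast {r : ℝ | ∃ s : E, 1 ≤ ⟪u, s⟫ ∧ 1 ≤ ⟪v, s⟫ ∧ r = ‖s‖ ^ 2} (2 / (1 + ⟪u, v⟫)) := by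
  refine ⟨⟨halfSpacesMinimizer u v, (inner_halfSpacesMinimizer_left hu hρ.ne').ge,
    (inner_halfSpacesMinimizer_right hv hρ.ne').ge,
    (norm_halfSpacesMinimizer_sq hu hv hρ.ne').symm⟩, ?_⟩
  rintro r ⟨s, hus, hvs, rfl⟩
  exact div_one_add_inner_le_norm_sq hu hv hρ hus hvs

end InnerProductSpace

section EuclideanSpace

open WithLp

variable {ι : Type*} [Fintype ι]

lemma real_inner_toLp_toLp (x y : ι → ℝ) : inner ℝ (toLp 2 x) (toLp 2 y) = ∑ i, x i * y i := by
  simp [EuclideanSpace.inner_toLp_toLp, dotProduct, mul_comm]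

lemma norm_toLp_sq (x : ι → ℝ) : ‖toLp 2 x‖ ^ 2 = ∑ i, x i ^ 2 :=
  EuclideanSpace.real_norm_sq_eq _

end EuclideanSpace

theorem min_norm_sq_two_halfspaces_general (n : ℕ) (lam lams : Fin n → ℝ)
    (hlam : ∀ i, 0 ≤ lam i) (hlams : ∀ i, 0 ≤ lams i)
    (hnorm : ∑ i, lam i ^ 2 = 1) (hnorms : ∑ i, lams i ^ 2 = 1)
    (ρ : ℝ) (hρ : ρ = ∑ i, lam i * lams i) :
    IsLeast {r : ℝ | ∃ s : Fin n → ℝ,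
        1 ≤ ∑ i, lam i * s i ∧ 1 ≤ ∑ i, lams i * s i ∧ r = ∑ i, s i ^ 2}
      (2 / (1 + ρ)) ∧
    (1 ≤ ∑ i, lam i * ((lam i + lams i) / (1 + ρ)) ∧
     1 ≤ ∑ i, lams i * ((lam i + lams i) / (1 + ρ)) ∧
     ∑ i, ((lam i + lams i) / (1 + ρ)) ^ 2 = 2 / (1 + ρ)) := by
  have hρ0 : 0 ≤ ρ := hρ ▸ sum_nonneg fun i _ => mul_nonneg (hlam i) (hlams i)
  have hu : ‖WithLp.toLp 2 lam‖ = 1 := by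
    rw [← pow_eq_one_iff_of_nonneg (norm_nonneg _) two_ne_zero, norm_toLp_sq, hnorm]
  have hv : ‖WithLp.toLp 2 lams‖ = 1 := by
    rw [← pow_eq_one_iff_of_nonneg (norm_nonneg _) two_ne_zero, norm_toLp_sq, hnorms]
  have huv : inner ℝ (WithLp.toLp 2 lam) (WithLp.toLp 2 lams) = ρ := by
    rw [real_inner_toLp_toLp, hρ]
  have hw : WithLp.toLp 2 (fun i => (lam i + lams i) / (1 + ρ)) =
      halfSpacesMinimizer (WithLp.toLp 2 lam) (WithLp.toLp 2 lams) := by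
    ext i; simp [halfSpacesMinimizer, huv, div_eq_inv_mul, mul_add]
  have hρ' : 0 < 1 + inner ℝ (WithLp.toLp 2 lam) (WithLp.toLp 2 lams) := by rw [huv]; linarith
  have hmin := isLeast_norm_sq_inter_halfSpaces hu hv hρ'
  simp only [(WithLp.toLp_surjective 2).exists, real_inner_toLp_toLp, norm_toLp_sq, huv]
    at hmin
  have h₁ := inner_halfSpacesMinimizer_left hu hρ'.ne'
  have h₂ := inner_halfSpacesMinimizer_right hv hρ'.ne'
  have h₃ := norm_halfSpacesMinimizer_sq hu hv hρ'.ne'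
  rw [← hw, real_inner_toLp_toLp] at h₁ h₂
  rw [← hw, norm_toLp_sq, huv] at h₃
  exact ⟨hmin, h₁.ge, h₂.ge, h₃⟩

/-- The minimum of ‖s‖² over {s : Σᵢ λᵢsᵢ ≥ 1, Σᵢ λᵢ*sᵢ ≥ 1} equals 2/(1+ϱ), attained at
sᵢ = (λᵢ + λᵢ*)/(1+ϱ). -/
theorem min_norm_sq_two_halfspaces (n : ℕ) (lam lams : Fin n → ℝ)
    (hlam : ∀ i, 0 ≤ lam i) (hlams : ∀ i, 0 ≤ lams i)
    (hnorm : ∑ i, lam i ^ 2 = 1) (hnorms : ∑ i, lams i ^ 2 = 1)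
    (ρ : ℝ) (hρ : ρ = ∑ i, lam i * lams i) (hρ1 : ρ < 1) :
    IsLeast {r : ℝ | ∃ s : Fin n → ℝ,
        1 ≤ ∑ i, lam i * s i ∧ 1 ≤ ∑ i, lams i * s i ∧ r = ∑ i, s i ^ 2}
      (2 / (1 + ρ)) ∧
    (1 ≤ ∑ i, lam i * ((lam i + lams i) / (1 + ρ)) ∧
     1 ≤ ∑ i, lams i * ((lam i + lams i) / (1 + ρ)) ∧
     ∑ i, ((lam i + lams i) / (1 + ρ)) ^ 2 = 2 / (1 + ρ)) :=
  min_norm_sq_two_halfspaces_general n lam lams hlam hlams hnorm hnorms ρ hρ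
end

section
/- Let X₁, …, Xₙ be independent random variables with P(Xᵢ > u) ∼ Lᵢ(u) u^{αᵢ} exp(−u²/2) as u → ∞ (Lᵢ slowly varying, αᵢ ∈ ℝ), and let λᵢ, λᵢ* > 0 satisfy Σᵢ λᵢ² = Σᵢ (λᵢ*)² = 1 and ϱ = Σᵢ λᵢλᵢ* ∈ [0,1). Set Qₙ = Σᵢ λᵢXᵢ, Wₙ = Σᵢ λᵢ*Xᵢ with distribution functions H, H*, and tᵤ = H⁻¹(1−1/u), tᵤ* = (H*)⁻¹(1−1/u). Then Qₙ and Wₙ are asymptotically independent: P(Qₙ > tᵤ, Wₙ > tᵤ*) / P(Qₙ > tᵤ) → 0 as u → ∞. -/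
/-!
By the tail asymptotics, `P(Xᵢ > 2u) ∼ 2^αᵢ e^{-3u²/2} P(Xᵢ > u)` (the slowly varying factor
cancels); iterating this along dyadic scales traps every tail between `exp(-b x²/2)` and
`exp(-b' x²/2)` for any `b < 1 < b'`. Independence transfers such two-sided Gaussian bounds to
`∑ cᵢ Xᵢ` with `1` replaced by `1 / ∑ cᵢ²` (Chernoff above, a product of marginal tails below).
Hence both quantiles `tᵤ, tᵤ*` are `√(2 log u)` up to factors close to `1`, so
`P(Qₙ > tᵤ) ≥ u^{-q}` for every `q > 1`, while the joint event forces
`Qₙ + Wₙ > tᵤ + tᵤ* ≈ 2√(2 log u)` with `∑ (λᵢ + λᵢ*)² = 2 + 2ϱ < 4`, which has probability at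
most `u^{-p}` for every `p < 2 / (1 + ϱ)`.
-/

open MeasureTheory ProbabilityTheory Filter Real
open scoped Topology

lemma le_of_le_on_Icc_of_doubling {g : ℝ → ℝ} {u₀ B : ℝ} (hu₀ : 0 < u₀)
    (hstep : ∀ u, u₀ ≤ u → g (2 * u) ≤ g u) (hbase : ∀ u ∈ Set.Icc u₀ (2 * u₀), g u ≤ B) :
    ∀ x, u₀ ≤ x → g x ≤ B := by
  have key : ∀ k : ℕ, ∀ x, u₀ ≤ x → x ≤ 2 ^ k * u₀ → g x ≤ B := by
    intro k
    induction k with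
    | zero => exact fun x hx hxk => hbase x ⟨hx, by linarith⟩
    | succ k ih =>
      intro x hx hxk
      rcases le_or_gt x (2 * u₀) with hsmall | hlarge
      · exact hbase x ⟨hx, hsmall⟩
      · have hhalf := ih (x / 2) (by linarith) (by rw [pow_succ] at hxk; linarith)
        simpa [mul_div_cancel₀] using (hstep (x / 2) (by linarith)).trans hhalf
  intro x hx
  obtain ⟨k, hk⟩ := pow_unbounded_of_one_lt (x / u₀) one_lt_two
  exact key k x hx ((div_lt_iff₀ hu₀).mp hk).le

lemma exists_le_mul_exp_of_doubling {P : ℝ → ℝ} {b : ℝ} (hb : 0 ≤ b) (hP1 : ∀ x, P x ≤ 1)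
    (h : ∀ᶠ u in atTop, P (2 * u) ≤ exp (-(3 * b * u ^ 2) / 2) * P u) :
    ∃ C, ∀ᶠ x in atTop, P x ≤ C * exp (-(b * x ^ 2) / 2) := by
  obtain ⟨u₁, hu₁⟩ := eventually_atTop.mp h
  set u₀ := max u₁ 1
  have hu₀ : 0 < u₀ := lt_max_of_lt_right one_pos
  have hg := le_of_le_on_Icc_of_doubling (g := fun x => P x * exp (b * x ^ 2 / 2))
    (B := exp (b * (2 * u₀) ^ 2 / 2)) hu₀
    (fun u hu => calc
      P (2 * u) * exp (b * (2 * u) ^ 2 / 2)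
          ≤ exp (-(3 * b * u ^ 2) / 2) * P u * exp (b * (2 * u) ^ 2 / 2) := by
        gcongr; exact hu₁ u (le_of_max_le_left hu)
      _ = P u * exp (b * u ^ 2 / 2) := by
        rw [mul_comm (exp _), mul_assoc, ← exp_add]; ring_nf)
    (fun u hu => calc
      P u * exp (b * u ^ 2 / 2) ≤ 1 * exp (b * u ^ 2 / 2) := by gcongr; exact hP1 u
      _ ≤ exp (b * (2 * u₀) ^ 2 / 2) := by
        rw [one_mul]; gcongr; exacts [hu₀.le.trans hu.1, hu.2])
  refine ⟨exp (b * (2 * u₀) ^ 2 / 2), eventually_atTop.mpr ⟨u₀, fun x hx => ?_⟩⟩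
  calc P x = P x * exp (b * x ^ 2 / 2) * exp (-(b * x ^ 2) / 2) := by
        rw [mul_assoc, ← exp_add]; ring_nf; simp
    _ ≤ _ := by gcongr; exact hg x hx

lemma exists_mul_exp_le_of_doubling {P : ℝ → ℝ} {b : ℝ} (hb : 0 ≤ b) (hP : Antitone P)
    (hpos : ∀ᶠ u in atTop, 0 < P u)
    (h : ∀ᶠ u in atTop, exp (-(3 * b * u ^ 2) / 2) * P u ≤ P (2 * u)) :
    ∃ c, 0 < c ∧ ∀ᶠ x in atTop, c * exp (-(b * x ^ 2) / 2) ≤ P x := by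
  obtain ⟨u₁, hu₁⟩ := eventually_atTop.mp (hpos.and h)
  set u₀ := max u₁ 1
  have hu₀ : 0 < u₀ := lt_max_of_lt_right one_pos
  have hP₀ : 0 < P (2 * u₀) := (hu₁ _ (by linarith [le_max_left u₁ 1])).1
  have hg := le_of_le_on_Icc_of_doubling (g := fun x => -(P x * exp (b * x ^ 2 / 2)))
    (B := -P (2 * u₀)) hu₀
    (fun u hu => neg_le_neg <| calc
      P u * exp (b * u ^ 2 / 2)
          = exp (-(3 * b * u ^ 2) / 2) * P u * exp (b * (2 * u) ^ 2 / 2) := by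
        rw [mul_comm (exp _), mul_assoc, ← exp_add]; ring_nf
      _ ≤ P (2 * u) * exp (b * (2 * u) ^ 2 / 2) := by
        gcongr; exact (hu₁ u (le_of_max_le_left hu)).2)
    (fun u hu => neg_le_neg <| calc
      P (2 * u₀) = P (2 * u₀) * 1 := (mul_one _).symm
      _ ≤ P u * exp (b * u ^ 2 / 2) := by
        gcongr
        · exact (hu₁ u (le_of_max_le_left hu.1)).1.le
        · exact hP hu.2
        · exact one_le_exp (by positivity))
  refine ⟨P (2 * u₀), hP₀, eventually_atTop.mpr ⟨u₀, fun x hx => ?_⟩⟩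
  calc P (2 * u₀) * exp (-(b * x ^ 2) / 2)
      ≤ P x * exp (b * x ^ 2 / 2) * exp (-(b * x ^ 2) / 2) := by
        gcongr; exact neg_le_neg_iff.mp (hg x hx)
    _ = P x := by rw [mul_assoc, ← exp_add]; ring_nf; simp

lemma tendsto_doubling_ratio {P L : ℝ → ℝ} {α : ℝ} (hL : ∀ u > 0, 0 < L u)
    (hL2 : Tendsto (fun u => L (2 * u) / L u) atTop (𝓝 1))
    (hP : Tendsto (fun u => P u / (L u * u ^ α * exp (-u ^ 2 / 2))) atTop (𝓝 1)) :
    Tendsto (fun u => P (2 * u) / (P u * exp (-(3 * u ^ 2) / 2))) atTop (𝓝 (2 ^ α)) := by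
  have hP2 := hP.comp (tendsto_id.const_mul_atTop two_pos)
  have hlim := (hP2.div hP one_ne_zero).mul (hL2.const_mul ((2 : ℝ) ^ α))
  simp only [div_one, mul_one, one_mul] at hlim
  refine hlim.congr' ((eventually_gt_atTop 0).mono fun u hu => ?_)
  have hLu := hL u hu
  have hL2u := hL (2 * u) (by positivity)
  have h2u : (2 * u) ^ α = 2 ^ α * u ^ α := mul_rpow zero_le_two hu.le
  have hexp : exp (-(2 * u) ^ 2 / 2) = exp (-(3 * u ^ 2) / 2) * exp (-u ^ 2 / 2) := by
    rw [← exp_add]; ring_nf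
  rcases eq_or_ne (P u) 0 with hPu | hPu
  · simp [hPu]
  · simp only [Pi.div_apply, Function.comp_apply, id, h2u, hexp]
    field_simp

lemma eventually_doubling_le {P : ℝ → ℝ} {κ b : ℝ} (hP0 : ∀ x, 0 ≤ P x) (hκ : 0 < κ)
    (hR : Tendsto (fun u => P (2 * u) / (P u * exp (-(3 * u ^ 2) / 2))) atTop (𝓝 κ))
    (hb : b < 1) :
    ∀ᶠ u in atTop, P (2 * u) ≤ exp (-(3 * b * u ^ 2) / 2) * P u := by
  have hgrow : Tendsto (fun u : ℝ => exp (3 * (1 - b) / 2 * u ^ 2)) atTop atTop :=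
    tendsto_exp_atTop.comp ((tendsto_pow_atTop two_ne_zero).const_mul_atTop (by linarith))
  filter_upwards [hR.eventually (gt_mem_nhds (lt_two_mul_self hκ)),
    hR.eventually (lt_mem_nhds hκ), hgrow.eventually_ge_atTop (2 * κ)] with u hlt hgt hκu
  set D := P u * exp (-(3 * u ^ 2) / 2)
  have hD : 0 < D := (mul_nonneg (hP0 u) (exp_pos _).le).lt_of_ne' fun h : D = 0 => by
    rw [h, div_zero] at hgt; exact lt_irrefl _ hgt
  calc P (2 * u) = P (2 * u) / D * D := (div_mul_cancel₀ _ hD.ne').symm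
    _ ≤ exp (3 * (1 - b) / 2 * u ^ 2) * D := by gcongr; linarith
    _ = exp (-(3 * b * u ^ 2) / 2) * P u := by
      simp only [D]; rw [mul_left_comm, ← exp_add]; ring_nf

lemma eventually_le_doubling {P : ℝ → ℝ} {κ b : ℝ} (hP0 : ∀ x, 0 ≤ P x) (hκ : 0 < κ)
    (hR : Tendsto (fun u => P (2 * u) / (P u * exp (-(3 * u ^ 2) / 2))) atTop (𝓝 κ))
    (hb : 1 < b) :
    ∀ᶠ u in atTop, exp (-(3 * b * u ^ 2) / 2) * P u ≤ P (2 * u) := by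
  have hdecay : Tendsto (fun u : ℝ => exp (-(3 * (b - 1) / 2 * u ^ 2))) atTop (𝓝 0) :=
    tendsto_exp_neg_atTop_nhds_zero.comp
      ((tendsto_pow_atTop two_ne_zero).const_mul_atTop (by linarith))
  filter_upwards [hR.eventually (lt_mem_nhds (half_lt_self hκ)),
    hdecay.eventually (ge_mem_nhds (half_pos hκ))] with u hgt hκu
  set D := P u * exp (-(3 * u ^ 2) / 2)
  have hD : 0 < D := (mul_nonneg (hP0 u) (exp_pos _).le).lt_of_ne' fun h : D = 0 => by
    rw [h, div_zero] at hgt; linarith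
  calc exp (-(3 * b * u ^ 2) / 2) * P u = exp (-(3 * (b - 1) / 2 * u ^ 2)) * D := by
        simp only [D]; rw [mul_left_comm, ← exp_add]; ring_nf
    _ ≤ P (2 * u) / D * D := by gcongr; linarith
    _ = P (2 * u) := div_mul_cancel₀ _ hD.ne'

section GaussianTails

variable {Ω : Type*} [MeasurableSpace Ω] {μ : Measure Ω}

-- `β` plays the role of `1 / σ²`: the tail is `exp (-β x² / 2)` up to factors `exp (o(x²))`.
def HasGaussianUpperTail (μ : Measure Ω) (X : Ω → ℝ) (β : ℝ) : Prop :=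
  ∀ b, 0 < b → b < β → ∃ C, ∀ᶠ x in atTop, μ.real {ω | x < X ω} ≤ C * exp (-(b * x ^ 2) / 2)

def HasGaussianLowerTail (μ : Measure Ω) (X : Ω → ℝ) (β : ℝ) : Prop :=
  ∀ b, β < b → ∃ c, 0 < c ∧ ∀ᶠ x in atTop, c * exp (-(b * x ^ 2) / 2) ≤ μ.real {ω | x < X ω}

def HasGaussianTail (μ : Measure Ω) (X : Ω → ℝ) (β : ℝ) : Prop :=
  HasGaussianUpperTail μ X β ∧ HasGaussianLowerTail μ X β

variable [IsProbabilityMeasure μ] {X : Ω → ℝ} {κ : ℝ}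

lemma hasGaussianTail_of_tendsto_doubling (hκ : 0 < κ)
    (hR : Tendsto (fun u => μ.real {ω | 2 * u < X ω} /
      (μ.real {ω | u < X ω} * exp (-(3 * u ^ 2) / 2))) atTop (𝓝 κ)) :
    HasGaussianTail μ X 1 := by
  set P : ℝ → ℝ := fun x => μ.real {ω | x < X ω}
  have hP0 : ∀ x, 0 ≤ P x := fun _ => measureReal_nonneg
  refine ⟨fun b hb hb1 => ?_, fun b hb => ?_⟩
  · exact exists_le_mul_exp_of_doubling hb.le (fun _ => measureReal_le_one)
      (eventually_doubling_le hP0 hκ hR hb1)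
  · refine exists_mul_exp_le_of_doubling (by linarith)
      (fun _ _ hxy => measureReal_mono fun _ hω => lt_of_le_of_lt hxy hω) ?_
      (eventually_le_doubling hP0 hκ hR hb)
    filter_upwards [hR.eventually (lt_mem_nhds hκ)] with u hu
    exact (hP0 u).lt_of_ne' fun h => by simp [P, h] at hu

end GaussianTails

lemma tendsto_sqrt_two_mul_log_div {b : ℝ} (hb : 0 < b) :
    Tendsto (fun u => √(2 * log u / b)) atTop atTop :=
  tendsto_sqrt_atTop.comp ((tendsto_log_atTop.const_mul_atTop two_pos).atTop_div_const hb)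

lemma exp_neg_mul_sqrt_two_mul_log_div_sq {u b : ℝ} (b' : ℝ) (hu : 1 ≤ u) (hb : 0 < b) :
    exp (-(b' * √(2 * log u / b) ^ 2) / 2) = u ^ (-(b' / b)) := by
  have hlog : 0 ≤ 2 * log u / b := div_nonneg (mul_nonneg zero_le_two (log_nonneg hu)) hb.le
  rw [sq_sqrt hlog, rpow_def_of_pos (by linarith)]
  congr 1
  field_simp

section Integrability

variable {Ω : Type*} [MeasurableSpace Ω] {μ : Measure Ω} [IsFiniteMeasure μ]

lemma integrable_of_measureReal_lt_le_rpow {f : Ω → ℝ} (hf0 : 0 ≤ f) (hf : Measurable f)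
    {C r : ℝ} (hr : 1 < r) (htail : ∀ᶠ t in atTop, μ.real {ω | t < f ω} ≤ C * t ^ (-r)) :
    Integrable f μ := by
  obtain ⟨T, hT⟩ := eventually_atTop.mp (htail.and (eventually_gt_atTop 0))
  have hT0 : 0 < T := (hT T le_rfl).2
  have hpow : IntegrableOn (fun t => C * t ^ (-r)) (Set.Ioi T) :=
    (integrableOn_Ioi_rpow_of_lt (by linarith) hT0).const_mul C
  refine ⟨hf.aestronglyMeasurable, ?_⟩
  rw [hasFiniteIntegral_iff_ofReal (ae_of_all _ hf0),
    lintegral_eq_lintegral_meas_lt μ (ae_of_all _ hf0) hf.aemeasurable,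
    ← Set.Ioc_union_Ioi_eq_Ioi hT0.le]
  calc ∫⁻ t in Set.Ioc 0 T ∪ Set.Ioi T, μ {ω | t < f ω}
      ≤ (∫⁻ _ in Set.Ioc 0 T, μ Set.univ) + ∫⁻ t in Set.Ioi T, ENNReal.ofReal (C * t ^ (-r)) := by
        refine (lintegral_union_le _ _ _).trans (add_le_add ?_ ?_)
        · exact setLIntegral_mono measurable_const fun _ _ => measure_mono (Set.subset_univ _)
        · refine setLIntegral_mono' measurableSet_Ioi fun t ht => ?_
          rw [← ofReal_measureReal]
          exact ENNReal.ofReal_le_ofReal (hT t (le_of_lt ht)).1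
    _ < ⊤ := by
        rw [setLIntegral_const, Real.volume_Ioc]
        exact ENNReal.add_lt_top.mpr ⟨ENNReal.mul_lt_top (measure_lt_top μ _) ENNReal.ofReal_lt_top,
          hpow.lintegral_lt_top⟩

end Integrability

section SumTails

variable {Ω : Type*} [MeasurableSpace Ω] {μ : Measure Ω}

lemma HasGaussianUpperTail.integrable_exp_mul_sq_max_zero [IsFiniteMeasure μ] {X : Ω → ℝ} {β b : ℝ}
    (h : HasGaussianUpperTail μ X β) (hX : Measurable X) (hb : 0 < b) (hbβ : b < β) :
    Integrable (fun ω => exp (b * max (X ω) 0 ^ 2 / 2)) μ := by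
  obtain ⟨C, hC⟩ := h ((b + β) / 2) (by linarith) (by linarith)
  refine integrable_of_measureReal_lt_le_rpow (C := C) (r := (b + β) / 2 / b)
    (fun _ => (exp_pos _).le) (by fun_prop) ((one_lt_div hb).mpr (by linarith)) ?_
  filter_upwards [(tendsto_sqrt_two_mul_log_div hb).eventually hC, eventually_ge_atTop 1]
    with t ht ht1
  rw [← exp_neg_mul_sqrt_two_mul_log_div_sq _ ht1 hb]
  refine le_trans (measureReal_mono fun ω (hω : t < _) => ?_) ht
  have hlog : 2 * log t / b < max (X ω) 0 ^ 2 := by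
    rw [div_lt_iff₀ hb]
    have := (log_lt_iff_lt_exp (by linarith)).mpr hω
    linarith
  have hsqrt : √(2 * log t / b) < max (X ω) 0 :=
    calc √(2 * log t / b) < √(max (X ω) 0 ^ 2) := sqrt_lt_sqrt
          (div_nonneg (mul_nonneg zero_le_two (log_nonneg ht1)) hb.le) hlog
      _ = max (X ω) 0 := sqrt_sq (le_max_right _ _)
  exact (lt_max_iff.mp hsqrt).resolve_right (not_lt.mpr (sqrt_nonneg _))

lemma HasGaussianUpperTail.exists_mgf_le [IsFiniteMeasure μ] {X : Ω → ℝ} {β b : ℝ}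
    (h : HasGaussianUpperTail μ X β) (hX : Measurable X) (hb : 0 < b) (hbβ : b < β) :
    ∃ B, ∀ s, 0 ≤ s →
      Integrable (fun ω => exp (s * X ω)) μ ∧ mgf X μ s ≤ B * exp (s ^ 2 / (2 * b)) := by
  have hint := h.integrable_exp_mul_sq_max_zero hX hb hbβ
  refine ⟨∫ ω, exp (b * max (X ω) 0 ^ 2 / 2) ∂μ, fun s hs => ?_⟩
  have hle : ∀ ω, exp (s * X ω) ≤ exp (s ^ 2 / (2 * b)) * exp (b * max (X ω) 0 ^ 2 / 2) := by
    intro ω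
    rw [← exp_add, exp_le_exp]
    have hamgm : s ^ 2 / (2 * b) + b * max (X ω) 0 ^ 2 / 2 - s * max (X ω) 0
        = (s - b * max (X ω) 0) ^ 2 / (2 * b) := by
      field_simp; ring
    have := mul_le_mul_of_nonneg_left (le_max_left (X ω) 0) hs
    have : 0 ≤ (s - b * max (X ω) 0) ^ 2 / (2 * b) := by positivity
    linarith
  have hint' : Integrable (fun ω => exp (s * X ω)) μ :=
    (hint.const_mul _).mono' (by fun_prop) (ae_of_all _ fun ω => by
      rw [norm_of_nonneg (exp_pos _).le]; exact hle ω)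
  refine ⟨hint', ?_⟩
  calc mgf X μ s ≤ ∫ ω, exp (s ^ 2 / (2 * b)) * exp (b * max (X ω) 0 ^ 2 / 2) ∂μ :=
        integral_mono hint' (hint.const_mul _) hle
    _ = _ := by rw [integral_const_mul, mul_comm]

variable {ι : Type*} [Fintype ι] {X : ι → Ω → ℝ} {c : ι → ℝ}

lemma measureReal_le_sum_mul_le_of_mgf_le (hm : ∀ i, Measurable (X i)) (hind : iIndepFun X μ)
    (hc : ∀ i, 0 ≤ c i) {b : ℝ} (hb : 0 < b) {B : ι → ℝ}
    (hB : ∀ i s, 0 ≤ s →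
      Integrable (fun ω => exp (s * X i ω)) μ ∧ mgf (X i) μ s ≤ B i * exp (s ^ 2 / (2 * b)))
    {v : ℝ} (hv : 0 ≤ v) :
    μ.real {ω | v ≤ ∑ i, c i * X i ω} ≤
      (∏ i, B i) * exp (-(b * v ^ 2) / (2 * ∑ i, c i ^ 2)) := by
  have := hind.isProbabilityMeasure
  set σ := ∑ i, c i ^ 2
  set θ := b * v / σ
  have hθ : 0 ≤ θ := by positivity
  set Y : ι → Ω → ℝ := fun i ω => c i * X i ω
  have hYm : ∀ i, Measurable (Y i) := fun i => (hm i).const_mul (c i)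
  have hYind : iIndepFun Y μ := hind.comp (fun i x => c i * x) fun i => measurable_const_mul _
  have hint : Integrable (fun ω => exp (θ * (∑ i, Y i) ω)) μ :=
    hYind.integrable_exp_mul_sum hYm fun i _ =>
      (hB i (c i * θ) (by positivity [hc i])).1.congr
        (ae_of_all _ fun ω => by simp only [Y]; ring_nf)
  calc μ.real {ω | v ≤ ∑ i, c i * X i ω} = μ.real {ω | v ≤ (∑ i, Y i) ω} := by
        simp only [Y, Finset.sum_apply]
    _ ≤ exp (-θ * v) * mgf (∑ i, Y i) μ θ := measure_ge_le_exp_mul_mgf v hθ hint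
    _ = exp (-θ * v) * ∏ i, mgf (X i) μ (c i * θ) := by
        rw [hYind.mgf_sum hYm]; simp only [Y, mgf_const_mul]
    _ ≤ exp (-θ * v) * ∏ i, (B i * exp ((c i * θ) ^ 2 / (2 * b))) := by
        gcongr with i
        · exact fun i _ => mgf_nonneg
        · exact (hB i _ (by positivity [hc i])).2
    _ = (∏ i, B i) * exp (-(b * v ^ 2) / (2 * σ)) := by
        rw [Finset.prod_mul_distrib, ← exp_sum, mul_left_comm, ← exp_add]
        have hsum : ∑ i, (c i * θ) ^ 2 / (2 * b) = θ ^ 2 / (2 * b) * σ := by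
          rw [Finset.mul_sum]; exact Finset.sum_congr rfl fun i _ => by ring
        rw [hsum]
        congr 2
        simp only [θ]
        field_simp
        ring

lemma hasGaussianUpperTail_sum_mul (hm : ∀ i, Measurable (X i)) (hind : iIndepFun X μ)
    (hc : ∀ i, 0 ≤ c i) (hσ : 0 < ∑ i, c i ^ 2) {β : ℝ}
    (hX : ∀ i, HasGaussianUpperTail μ (X i) β) :
    HasGaussianUpperTail μ (fun ω => ∑ i, c i * X i ω) (β / ∑ i, c i ^ 2) := by
  have := hind.isProbabilityMeasure
  intro b hb hbβ
  have hbσ : 0 < b * ∑ i, c i ^ 2 := mul_pos hb hσ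
  choose B hB using fun i => (hX i).exists_mgf_le (hm i) hbσ ((lt_div_iff₀ hσ).mp hbβ)
  refine ⟨∏ i, B i, (eventually_ge_atTop 0).mono fun v hv => ?_⟩
  calc μ.real {ω | v < ∑ i, c i * X i ω} ≤ μ.real {ω | v ≤ ∑ i, c i * X i ω} :=
        measureReal_mono fun _ (hω : v < _) => show v ≤ _ from hω.le
    _ ≤ _ := measureReal_le_sum_mul_le_of_mgf_le hm hind hc hbσ hB hv
    _ = (∏ i, B i) * exp (-(b * v ^ 2) / 2) := by
        congr 2; field_simp

lemma hasGaussianLowerTail_sum_mul [Nonempty ι] (hind : iIndepFun X μ) (hc : ∀ i, 0 < c i)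
    {β : ℝ} (hX : ∀ i, HasGaussianLowerTail μ (X i) β) :
    HasGaussianLowerTail μ (fun ω => ∑ i, c i * X i ω) (β / ∑ i, c i ^ 2) := by
  have := hind.isProbabilityMeasure
  intro b hb
  have hσ : 0 < ∑ i, c i ^ 2 := Finset.sum_pos (fun i _ => pow_pos (hc i) 2) Finset.univ_nonempty
  generalize hσdef : ∑ i, c i ^ 2 = σ at hb hσ
  choose c' hc' hev using fun i => hX i (b * σ) ((div_lt_iff₀ hσ).mp hb)
  -- `∑ c i * X i > v` once every `X i` exceeds its share `c i * v / σ`; these shares make the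
  -- product of the marginal lower bounds exactly `exp (-b v² / 2)`
  have hx : ∀ i, Tendsto (fun v => c i * v / σ) atTop atTop := fun i =>
    (tendsto_id.const_mul_atTop (hc i)).atTop_div_const hσ
  refine ⟨∏ i, c' i, Finset.prod_pos fun i _ => hc' i, ?_⟩
  filter_upwards [eventually_all.mpr fun i => (hx i).eventually (hev i)] with v hv
  have hsub : (⋂ i, {ω | c i * v / σ < X i ω}) ⊆ {ω | v < ∑ i, c i * X i ω} := by
    intro ω hω
    have hshare : ∑ i, c i * (c i * v / σ) = v :=
      calc ∑ i, c i * (c i * v / σ) = (∑ i, c i ^ 2) * v / σ := by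
            rw [Finset.sum_mul, Finset.sum_div]; exact Finset.sum_congr rfl fun i _ => by ring
        _ = v := by rw [hσdef]; field_simp
    rw [Set.mem_ofPred_eq, ← hshare]
    exact Finset.sum_lt_sum_of_nonempty Finset.univ_nonempty fun i _ =>
      mul_lt_mul_of_pos_left (Set.mem_iInter.mp hω i) (hc i)
  calc (∏ i, c' i) * exp (-(b * v ^ 2) / 2)
      = ∏ i, c' i * exp (-(b * σ * (c i * v / σ) ^ 2) / 2) := by
        rw [Finset.prod_mul_distrib, ← exp_sum]
        congr 2
        simp_rw [show ∀ i, -(b * σ * (c i * v / σ) ^ 2) / 2 = -(b * v ^ 2) / (2 * σ) * c i ^ 2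
          from fun i => by field_simp]
        rw [← Finset.mul_sum, hσdef]
        field_simp
    _ ≤ ∏ i, μ.real {ω | c i * v / σ < X i ω} :=
        Finset.prod_le_prod (fun i _ => by positivity [hc' i]) fun i _ => hv i
    _ = μ.real (⋂ i, {ω | c i * v / σ < X i ω}) := by
        simp only [measureReal_def]
        rw [hind.meas_iInter (s := fun i => {ω | c i * v / σ < X i ω})
          fun i => ⟨Set.Ioi _, measurableSet_Ioi, rfl⟩, ENNReal.toReal_prod]
    _ ≤ μ.real {ω | v < ∑ i, c i * X i ω} := measureReal_mono hsub

lemma hasGaussianTail_sum_mul [Nonempty ι] (hm : ∀ i, Measurable (X i)) (hind : iIndepFun X μ)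
    (hc : ∀ i, 0 < c i) {β : ℝ} (hX : ∀ i, HasGaussianTail μ (X i) β) :
    HasGaussianTail μ (fun ω => ∑ i, c i * X i ω) (β / ∑ i, c i ^ 2) :=
  ⟨hasGaussianUpperTail_sum_mul hm hind (fun i => (hc i).le)
      (Finset.sum_pos (fun i _ => pow_pos (hc i) 2) Finset.univ_nonempty) fun i => (hX i).1,
    hasGaussianLowerTail_sum_mul hind hc fun i => (hX i).2⟩

end SumTails

lemma eventually_mul_rpow_neg_le_inv (C : ℝ) {r : ℝ} (hr : 1 < r) :
    ∀ᶠ u in atTop, C * u ^ (-r) ≤ u⁻¹ := by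
  filter_upwards [(tendsto_rpow_atTop (sub_pos.mpr hr)).eventually_ge_atTop C,
    eventually_gt_atTop 0] with u hC hu
  have hsplit : u ^ (-r) = u⁻¹ * (u ^ (r - 1))⁻¹ := by
    rw [← rpow_neg_one, ← rpow_neg hu.le, ← rpow_add hu]; ring_nf
  calc C * u ^ (-r) ≤ u ^ (r - 1) * (u⁻¹ * (u ^ (r - 1))⁻¹) := by rw [hsplit]; gcongr
    _ = u⁻¹ := by field_simp

lemma eventually_inv_lt_mul_rpow_neg {c r : ℝ} (hc : 0 < c) (hr : r < 1) :
    ∀ᶠ u in atTop, u⁻¹ < c * u ^ (-r) := by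
  filter_upwards [(tendsto_rpow_atTop (sub_pos.mpr hr)).eventually_gt_atTop c⁻¹,
    eventually_gt_atTop 0] with u hc' hu
  have hsplit : u ^ (-r) = u⁻¹ * u ^ (1 - r) := by
    rw [← rpow_neg_one, ← rpow_add hu]; ring_nf
  calc u⁻¹ = c * c⁻¹ * u⁻¹ := by field_simp
    _ < c * (u⁻¹ * u ^ (1 - r)) := by rw [mul_assoc, mul_comm c⁻¹]; gcongr
    _ = c * u ^ (-r) := by rw [hsplit]

lemma tendsto_div_of_le_mul_rpow_neg {f g : ℝ → ℝ} {c D p q : ℝ} (hc : 0 < c) (hqp : q < p)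
    (hf0 : ∀ᶠ u in atTop, 0 ≤ f u) (hf : ∀ᶠ u in atTop, f u ≤ D * u ^ (-p))
    (hg : ∀ᶠ u in atTop, c * u ^ (-q) ≤ g u) :
    Tendsto (fun u => f u / g u) atTop (𝓝 0) := by
  have hlim : Tendsto (fun u : ℝ => D / c * u ^ (-(p - q))) atTop (𝓝 0) := by
    simpa using (tendsto_rpow_neg_atTop (sub_pos.mpr hqp)).const_mul (D / c)
  refine tendsto_of_tendsto_of_tendsto_of_le_of_le' tendsto_const_nhds hlim ?_ ?_
  · filter_upwards [hf0, hg, eventually_gt_atTop 0] with u h0 hgu hu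
    exact div_nonneg h0 ((by positivity : 0 ≤ c * u ^ (-q)).trans hgu)
  · filter_upwards [hf0, hf, hg, eventually_gt_atTop 0] with u h0 hfu hgu hu
    calc f u / g u ≤ D * u ^ (-p) / (c * u ^ (-q)) :=
          div_le_div₀ (h0.trans hfu) hfu (by positivity) hgu
      _ = D / c * u ^ (-(p - q)) := by
          rw [neg_sub, rpow_sub hu, rpow_neg hu.le, rpow_neg hu.le]; field_simp

section Quantile

variable {Ω : Type*} [MeasurableSpace Ω] {μ : Measure Ω} {Q : Ω → ℝ}

noncomputable def quantile (μ : Measure Ω) (Q : Ω → ℝ) (p : ℝ) : ℝ :=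
  sInf {x : ℝ | p ≤ μ.real {ω | Q ω ≤ x}}

lemma quantile_mem_Icc [IsProbabilityMeasure μ] (hQ : Measurable Q) {p y z : ℝ}
    (hy : 1 - p < μ.real {ω | y < Q ω}) (hz : μ.real {ω | z < Q ω} ≤ 1 - p) :
    quantile μ Q p ∈ Set.Icc y z := by
  have hmem : ∀ x, p ≤ μ.real {ω | Q ω ≤ x} ↔ μ.real {ω | x < Q ω} ≤ 1 - p := by
    intro x
    have hcompl : μ.real {ω | Q ω ≤ x} = 1 - μ.real {ω | x < Q ω} := by
      rw [← probReal_compl_eq_one_sub (measurableSet_lt measurable_const hQ)]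
      congr 1; ext; simp
    rw [hcompl]; constructor <;> intro h <;> linarith
  have hlow : ∀ x ∈ {x : ℝ | p ≤ μ.real {ω | Q ω ≤ x}}, y ≤ x := fun x hx => by
    by_contra! hxy
    have : μ.real {ω | y < Q ω} ≤ μ.real {ω | x < Q ω} :=
      measureReal_mono fun ω (hω : y < Q ω) => show x < Q ω from hxy.trans hω
    linarith [(hmem x).mp hx]
  have hz' : z ∈ {x : ℝ | p ≤ μ.real {ω | Q ω ≤ x}} := (hmem z).mpr hz
  exact ⟨le_csInf ⟨z, hz'⟩ hlow, csInf_le ⟨y, hlow⟩ hz'⟩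

lemma HasGaussianUpperTail.eventually_measureReal_le_inv {β b : ℝ}
    (h : HasGaussianUpperTail μ Q β) (hb : 0 < b) (hbβ : b < β) :
    ∀ᶠ u in atTop, μ.real {ω | √(2 * log u / b) < Q ω} ≤ u⁻¹ := by
  obtain ⟨C, hC⟩ := h ((b + β) / 2) (by linarith) (by linarith)
  filter_upwards [(tendsto_sqrt_two_mul_log_div hb).eventually hC, eventually_ge_atTop 1,
    eventually_mul_rpow_neg_le_inv C (r := (b + β) / 2 / b) ((one_lt_div hb).mpr (by linarith))]
    with u hu hu1 hCu
  rw [exp_neg_mul_sqrt_two_mul_log_div_sq _ hu1 hb] at hu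
  exact hu.trans hCu

lemma HasGaussianLowerTail.eventually_inv_lt_measureReal {β b : ℝ}
    (h : HasGaussianLowerTail μ Q β) (hb : 0 < b) (hβb : β < b) :
    ∀ᶠ u in atTop, u⁻¹ < μ.real {ω | √(2 * log u / b) < Q ω} := by
  obtain ⟨c, hc, hev⟩ := h ((β + b) / 2) (by linarith)
  filter_upwards [(tendsto_sqrt_two_mul_log_div hb).eventually hev, eventually_ge_atTop 1,
    eventually_inv_lt_mul_rpow_neg hc ((div_lt_one hb).mpr (by linarith : (β + b) / 2 < b))]
    with u hu hu1 hcu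
  rw [exp_neg_mul_sqrt_two_mul_log_div_sq _ hu1 hb] at hu
  exact hcu.trans_le hu

variable [IsProbabilityMeasure μ] {β : ℝ}

lemma eventually_quantile_mem_Icc (hQ : Measurable Q) (hQt : HasGaussianTail μ Q β)
    {b b' : ℝ} (hb : 0 < b) (hbβ : b < β) (hβb' : β < b') :
    ∀ᶠ u in atTop, quantile μ Q (1 - u⁻¹) ∈ Set.Icc √(2 * log u / b') √(2 * log u / b) := by
  filter_upwards [hQt.2.eventually_inv_lt_measureReal (by linarith) hβb',
    hQt.1.eventually_measureReal_le_inv hb hbβ] with u hlow hup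
  exact quantile_mem_Icc hQ (by rwa [sub_sub_cancel]) (by rwa [sub_sub_cancel])

lemma exists_mul_rpow_neg_le_measureReal_quantile_lt (hQ : Measurable Q)
    (hQt : HasGaussianTail μ Q β) (hβ : 0 < β) {q : ℝ} (hq : 1 < q) :
    ∃ c, 0 < c ∧ ∀ᶠ u in atTop, c * u ^ (-q) ≤ μ.real {ω | quantile μ Q (1 - u⁻¹) < Q ω} := by
  obtain ⟨b, hβb, hbβ⟩ := exists_between (div_lt_self hβ hq)
  have hb : 0 < b := (div_pos hβ (by linarith)).trans hβb
  have hqb : β < q * b := by rw [mul_comm]; exact (div_lt_iff₀ (by linarith)).mp hβb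
  have hqb0 : 0 < q * b := mul_pos (by linarith) hb
  obtain ⟨c, hc, hev⟩ := hQt.2 (q * b) hqb
  have hquant := eventually_quantile_mem_Icc hQ hQt hb hbβ hqb
  have htend : Tendsto (fun u => quantile μ Q (1 - u⁻¹)) atTop atTop :=
    tendsto_atTop_mono' atTop (hquant.mono fun _ hu => hu.1) (tendsto_sqrt_two_mul_log_div hqb0)
  refine ⟨c, hc, ?_⟩
  filter_upwards [hquant, htend.eventually hev, eventually_ge_atTop 1] with u hu hcu hu1
  calc c * u ^ (-q) = c * exp (-(q * b * √(2 * log u / b) ^ 2) / 2) := by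
        rw [exp_neg_mul_sqrt_two_mul_log_div_sq _ hu1 hb, mul_div_cancel_right₀ _ hb.ne']
    _ ≤ c * exp (-(q * b * quantile μ Q (1 - u⁻¹) ^ 2) / 2) := by
        gcongr
        exacts [(sqrt_nonneg _).trans hu.1, hu.2]
    _ ≤ _ := hcu

lemma exists_measureReal_quantile_lt_and_quantile_lt_le {W : Ω → ℝ} (hQ : Measurable Q)
    (hW : Measurable W) (hQt : HasGaussianTail μ Q β) (hWt : HasGaussianTail μ W β) {γ : ℝ}
    (hS : HasGaussianUpperTail μ (fun ω => Q ω + W ω) γ) (hβ : 0 < β) {p : ℝ} (hp0 : 0 < p)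
    (hp : p < 4 * γ / β) :
    ∃ D, ∀ᶠ u in atTop,
      μ.real {ω | quantile μ Q (1 - u⁻¹) < Q ω ∧ quantile μ W (1 - u⁻¹) < W ω} ≤
        D * u ^ (-p) := by
  obtain ⟨b, hβb, hbγ⟩ := exists_between
    (show β < 4 * γ / p by rwa [lt_div_iff₀ hp0, mul_comm, ← lt_div_iff₀ hβ])
  have hb : 0 < b := hβ.trans hβb
  obtain ⟨D, hD⟩ := hS (p * b / 4) (by positivity)
    (by rw [lt_div_iff₀ hp0] at hbγ; linarith)
  have hy := (tendsto_sqrt_two_mul_log_div hb).const_mul_atTop two_pos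
  refine ⟨D, ?_⟩
  filter_upwards [eventually_quantile_mem_Icc hQ hQt (half_pos hβ) (half_lt_self hβ) hβb,
    eventually_quantile_mem_Icc hW hWt (half_pos hβ) (half_lt_self hβ) hβb,
    hy.eventually hD, eventually_ge_atTop 1] with u hQu hWu hDu hu1
  calc μ.real {ω | quantile μ Q (1 - u⁻¹) < Q ω ∧ quantile μ W (1 - u⁻¹) < W ω}
      ≤ μ.real {ω | 2 * √(2 * log u / b) < Q ω + W ω} :=
        measureReal_mono fun ω (hω : _ ∧ _) =>
          show 2 * √(2 * log u / b) < Q ω + W ω by linarith [hω.1, hω.2, hQu.1, hWu.1]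
    _ ≤ D * exp (-(p * b / 4 * (2 * √(2 * log u / b)) ^ 2) / 2) := hDu
    _ = D * u ^ (-p) := by
        rw [show -p = -(p * b / b) by field_simp, ← exp_neg_mul_sqrt_two_mul_log_div_sq _ hu1 hb]
        ring_nf

end Quantile

/-- Asymptotic independence of two proportional-reinsurance portfolios of independent
Gaussian-like risks: P(Qₙ > tᵤ, Wₙ > tᵤ*) / P(Qₙ > tᵤ) → 0 as u → ∞. -/
theorem portfolios_asymptotic_independence {Ω : Type*} [MeasurableSpace Ω] (μ : Measure Ω)
    [IsProbabilityMeasure μ] (n : ℕ) (hn : 0 < n)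
    (X : Fin n → Ω → ℝ) (hm : ∀ i, Measurable (X i))
    (hind : iIndepFun X μ)
    (L : Fin n → ℝ → ℝ) (α : Fin n → ℝ)
    (hLpos : ∀ i, ∀ u > 0, 0 < L i u)
    (hsv : ∀ i, ∀ t > 0, Tendsto (fun u => L i (t * u) / L i u) atTop (𝓝 1))
    (htail : ∀ i, Tendsto (fun u : ℝ => (μ {ω | X i ω > u}).toReal /
        (L i u * u ^ (α i) * Real.exp (-u ^ 2 / 2))) atTop (𝓝 1))
    (lam lams : Fin n → ℝ) (hlam : ∀ i, 0 < lam i) (hlams : ∀ i, 0 < lams i)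
    (hnorm : ∑ i, lam i ^ 2 = 1) (hnorms : ∑ i, lams i ^ 2 = 1)
    (ρ : ℝ) (hρ : ρ = ∑ i, lam i * lams i) (hρ0 : 0 ≤ ρ) (hρ1 : ρ < 1)
    (t ts : ℝ → ℝ)
    (ht : ∀ u, t u = sInf {x : ℝ | 1 - 1 / u ≤ (μ {ω | (∑ i, lam i * X i ω) ≤ x}).toReal})
    (hts : ∀ u, ts u = sInf {x : ℝ | 1 - 1 / u ≤ (μ {ω | (∑ i, lams i * X i ω) ≤ x}).toReal}) :
    Tendsto (fun u : ℝ =>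
        (μ {ω | (∑ i, lam i * X i ω) > t u ∧ (∑ i, lams i * X i ω) > ts u}).toReal /
          (μ {ω | (∑ i, lam i * X i ω) > t u}).toReal)
      atTop (𝓝 0) := by
  have : Nonempty (Fin n) := ⟨⟨0, hn⟩⟩
  have hX : ∀ i, HasGaussianTail μ (X i) 1 := fun i =>
    hasGaussianTail_of_tendsto_doubling (by positivity) <|
      tendsto_doubling_ratio (P := fun u => μ.real {ω | u < X i ω}) (hLpos i) (hsv i 2 two_pos)
        (htail i)
  have hQ := hasGaussianTail_sum_mul hm hind hlam hX
  have hW := hasGaussianTail_sum_mul hm hind hlams hX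
  rw [hnorm, div_one] at hQ
  rw [hnorms, div_one] at hW
  have hsq : ∑ i, (lam i + lams i) ^ 2 = 2 + 2 * ρ := by
    simp only [add_sq, Finset.sum_add_distrib, hnorm, hnorms, hρ, Finset.mul_sum, mul_assoc]
    ring
  have hS := (hasGaussianTail_sum_mul hm hind (fun i => add_pos (hlam i) (hlams i)) hX).1
  simp only [hsq, add_mul, Finset.sum_add_distrib] at hS
  obtain ⟨p, hp1, hp⟩ := exists_between
    (show 1 < 4 * (1 / (2 + 2 * ρ)) / 1 by rw [div_one, mul_one_div, one_lt_div] <;> linarith)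
  obtain ⟨q, hq1, hqp⟩ := exists_between hp1
  obtain ⟨c, hc, hden⟩ :=
    exists_mul_rpow_neg_le_measureReal_quantile_lt (by fun_prop) hQ one_pos hq1
  obtain ⟨D, hnum⟩ := exists_measureReal_quantile_lt_and_quantile_lt_le (by fun_prop)
    (by fun_prop) hQ hW hS one_pos (by linarith) hp
  have hquant : ∀ u, t u = quantile μ (fun ω => ∑ i, lam i * X i ω) (1 - u⁻¹) ∧
      ts u = quantile μ (fun ω => ∑ i, lams i * X i ω) (1 - u⁻¹) := fun u => by
    rw [ht, hts, one_div]; exact ⟨rfl, rfl⟩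
  simp only [hquant]
  exact tendsto_div_of_le_mul_rpow_neg hc hqp (.of_forall fun _ => ENNReal.toReal_nonneg) hnum hden
end

section
/- Let X₁, …, Xₙ be independent standard normal random variables, S₁, …, Sₙ nonnegative random variables independent of the Xᵢ, and λ₁, …, λₙ ∈ ℝ. Then Σᵢ λᵢ√(Sᵢ)Xᵢ has the same distribution as X₁·√(Σᵢ λᵢ²Sᵢ). -/
/-!
Conditionally on `S = s`, the sum `∑ λᵢ √sᵢ Xᵢ` is a linear combination of independent standard
Gaussians, hence has law `N(0, ∑ λᵢ² sᵢ)`, which is also the law of `X₁ √(∑ λᵢ² sᵢ)`. As `S` is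
independent of `X`, both laws are obtained by integrating these equal conditional laws against the
law of `S`.
-/

open MeasureTheory ProbabilityTheory
open scoped NNReal

namespace ProbabilityTheory

variable {Ω β γ δ : Type*} [MeasurableSpace Ω] [MeasurableSpace β] [MeasurableSpace γ]
  [MeasurableSpace δ] {μ : Measure Ω}

lemma map_eq_map_of_indepFun_of_ae_map_eq [IsFiniteMeasure μ] {Y : Ω → β} {Z : Ω → γ}
    (hY : Measurable Y) (hZ : Measurable Z) (hYZ : IndepFun Y Z μ) {F G : β × γ → δ}
    (hF : Measurable F) (hG : Measurable G)
    (h : ∀ᵐ y ∂μ.map Y, μ.map (fun ω => F (y, Z ω)) = μ.map (fun ω => G (y, Z ω))) :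
    μ.map (fun ω => F (Y ω, Z ω)) = μ.map (fun ω => G (Y ω, Z ω)) := by
  have hlaw : ∀ H : β × γ → δ, Measurable H →
      μ.map (fun ω => H (Y ω, Z ω)) = ((μ.map Y).prod (μ.map Z)).map H := fun H hH => by
    rw [← (indepFun_iff_map_prod_eq_prod_map_map hY.aemeasurable hZ.aemeasurable).1 hYZ,
      Measure.map_map hH (hY.prodMk hZ)]
    rfl
  have hsection : ∀ H : β × γ → δ, Measurable H → ∀ y, ∀ A, MeasurableSet A →
      μ.map (fun ω => H (y, Z ω)) A = μ.map Z (Prod.mk y ⁻¹' (H ⁻¹' A)) := fun H hH y A hA => by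
    rw [Measure.map_apply hZ (measurable_prodMk_left (hH hA)), Measure.map_apply (by fun_prop) hA]
    rfl
  rw [hlaw F hF, hlaw G hG]
  ext A hA
  rw [Measure.map_apply hF hA, Measure.map_apply hG hA, Measure.prod_apply (hF hA),
    Measure.prod_apply (hG hA)]
  refine lintegral_congr_ae (h.mono fun y hy => ?_)
  dsimp only
  rw [← hsection F hF y A hA, ← hsection G hG y A hA, hy]

lemma map_finsetSum_mul_eq_gaussianReal [IsProbabilityMeasure μ] {ι : Type*} {X : ι → Ω → ℝ}
    (hmX : ∀ i, Measurable (X i)) {m : ι → ℝ} {v : ι → ℝ≥0}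
    (hX : ∀ i, μ.map (X i) = gaussianReal (m i) (v i)) (hind : iIndepFun X μ) (c : ι → ℝ)
    (s : Finset ι) :
    μ.map (fun ω => ∑ i ∈ s, c i * X i ω) =
      gaussianReal (∑ i ∈ s, c i * m i) (∑ i ∈ s, .mk (c i ^ 2) (sq_nonneg _) * v i) := by
  classical
  induction s using Finset.induction_on with
  | empty => simp [gaussianReal_zero_var]
  | insert j s hj ih =>
    have hscaled : iIndepFun (fun i ω => c i * X i ω) μ :=
      hind.comp (fun i x => c i * x) fun i => measurable_const_mul (c i)
    have hindep : IndepFun (fun ω => c j * X j ω) (fun ω => ∑ i ∈ s, c i * X i ω) μ := by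
      simpa only [Finset.sum_fn] using
        (hscaled.indepFun_finsetSum_of_notMem (fun i => (hmX i).const_mul (c i)) hj).symm
    have hj_law : μ.map (fun ω => c j * X j ω) =
        gaussianReal (c j * m j) (.mk (c j ^ 2) (sq_nonneg _) * v j) := by
      rw [show (fun ω => c j * X j ω) = (c j * ·) ∘ X j from rfl,
        ← Measure.map_map (measurable_const_mul (c j)) (hmX j), hX j, gaussianReal_map_const_mul]
    simp_rw [Finset.sum_insert hj]
    exact gaussianReal_add_gaussianReal_of_indepFun hindep hj_law ih

lemma map_sum_mul_sqrt_mul_eq_map_mul_sqrt_sum [IsProbabilityMeasure μ] {ι : Type*} [Fintype ι]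
    {X : ι → Ω → ℝ} (hmX : ∀ i, Measurable (X i)) (hX : ∀ i, μ.map (X i) = gaussianReal 0 1)
    (hind : iIndepFun X μ) (lam : ι → ℝ) {s : ι → ℝ} (hs : 0 ≤ s) (i₀ : ι) :
    μ.map (fun ω => ∑ i, lam i * Real.sqrt (s i) * X i ω) =
      μ.map (fun ω => X i₀ ω * Real.sqrt (∑ i, lam i ^ 2 * s i)) := by
  have hvar : 0 ≤ ∑ i, lam i ^ 2 * s i :=
    Finset.sum_nonneg fun i _ => mul_nonneg (sq_nonneg _) (hs i)
  rw [map_finsetSum_mul_eq_gaussianReal hmX hX hind _ _,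
    show (fun ω => X i₀ ω * Real.sqrt (∑ i, lam i ^ 2 * s i)) = (· * _) ∘ X i₀ from rfl,
    ← Measure.map_map (measurable_mul_const _) (hmX i₀), hX i₀, gaussianReal_map_mul_const]
  congr 1
  · simp
  · ext
    simp [mul_pow, Real.sq_sqrt hvar, Real.sq_sqrt (hs _)]

end ProbabilityTheory

/-- Randomly scaled Gaussian portfolio identity: Σᵢ λᵢ√(Sᵢ)Xᵢ has the same distribution as
X₁·√(Σᵢ λᵢ²Sᵢ). -/
theorem scaled_gaussian_portfolio_eq_dist {Ω : Type*} [MeasurableSpace Ω] (μ : Measure Ω)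
    [IsProbabilityMeasure μ] (n : ℕ) (hn : 0 < n)
    (X : Fin n → Ω → ℝ) (S : Fin n → Ω → ℝ)
    (hmX : ∀ i, Measurable (X i)) (hmS : ∀ i, Measurable (S i))
    (hS0 : ∀ i, ∀ ω, 0 ≤ S i ω)
    (hgauss : ∀ i, μ.map (X i) = gaussianReal 0 1)
    (hindX : iIndepFun X μ)
    (hindSX : IndepFun (fun ω => fun i => S i ω) (fun ω => fun i => X i ω) μ)
    (lam : Fin n → ℝ) :
    μ.map (fun ω => ∑ i, lam i * Real.sqrt (S i ω) * X i ω) =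
      μ.map (fun ω => X ⟨0, hn⟩ ω * Real.sqrt (∑ i, lam i ^ 2 * S i ω)) := by
  have hmSvec : Measurable fun ω i => S i ω := measurable_pi_lambda _ hmS
  have hS_nonneg : ∀ᵐ s ∂μ.map (fun ω i => S i ω), 0 ≤ s :=
    (ae_map_iff hmSvec.aemeasurable measurableSet_Ici).2 (ae_of_all _ fun ω i => hS0 i ω)
  exact map_eq_map_of_indepFun_of_ae_map_eq hmSvec (measurable_pi_lambda _ hmX) hindSX
    (F := fun p => ∑ i, lam i * Real.sqrt (p.1 i) * p.2 i)
    (G := fun p => p.2 ⟨0, hn⟩ * Real.sqrt (∑ i, lam i ^ 2 * p.1 i)) (by fun_prop) (by fun_prop)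
    (hS_nonneg.mono fun s hs => map_sum_mul_sqrt_mul_eq_map_mul_sqrt_sum hmX hgauss hindX lam hs _)
end

section
/- Let X₁, X₂ be independent random variables with P(Xᵢ > u) ∼ Lᵢ(u)u^{αᵢ}exp(−u²/(2pᵢ²)) as u → ∞, where p₁ ≤ p₂ and p₁² + p₂² = 1. Set c = 1.1. Then for every ε > 0, P(X₁ + X₂ > x, X₂ ≤ (1 − c p₁)x) = O(x^{α₁+ε} exp(−c²x²/2)) and P(X₁ + X₂ > x, X₂ > c p₂ x) = O(x^{α₂+ε} exp(−c²x²/2)) as x → ∞. -/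
/-!
On the first event `X₁ > c p₁ x`, on the second `X₂ > c p₂ x`, so both bounds reduce to one
tail estimate `P(X > c p x) = O(x^{α+ε} e^{-c²x²/2})`. Write the tail as
`P(X > u) = M(u) u^α e^{-u²/(2p²)}`; then `M ~ L`, so `M` is slowly varying, and `M` is
measurable because the tail is monotone. For measurable slowly varying `M` the uniform convergence
theorem (proved by the Csiszár–Erdős measure argument) gives `log |M(u)| = o(log u)`, hence the
Potter-type bound `|M(u)| ≤ u^ε`, and substituting `u = c p x` turns `e^{-u²/(2p²)}` into
`e^{-c²x²/2}`.
-/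

open MeasureTheory ProbabilityTheory Filter Asymptotics Set
open scoped Topology

theorem exists_mem_and_add_mem_of_lt_volume {E : Set ℝ} {a b s : ℝ} (hE : MeasurableSet E)
    (hEab : E ⊆ Icc a b) {c : ℝ} (hs : s ∈ Icc 0 c)
    (hvol : ENNReal.ofReal (b - a + c) < 2 * volume E) : ∃ u ∈ E, s + u ∈ E := by
  have hshift : (fun u => s + u) ⁻¹' E ⊆ Icc (a - s) b := fun u hu => by
    have := hEab hu; constructor <;> linarith [this.1, this.2, hs.1]
  have hE' : E ⊆ Icc (a - s) b := hEab.trans (Icc_subset_Icc_left (by linarith [hs.1]))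
  have hvol' : volume (Icc (a - s) b) < volume E + volume ((fun u => s + u) ⁻¹' E) := by
    rw [measure_preimage_add, ← two_mul, Real.volume_Icc]
    refine lt_of_le_of_lt (ENNReal.ofReal_le_ofReal ?_) hvol
    linarith [hs.2]
  obtain ⟨u, huE, hsuE⟩ := nonempty_inter_of_measure_lt_add' volume hE hE' hshift hvol'
  exact ⟨u, huE, hsuE⟩

theorem tendsto_measure_inter_iInter_ge {α : Type*} [MeasurableSpace α] (μ : Measure α)
    (K : Set α) {P : ℕ → Set α} (hP : ∀ u ∈ K, ∀ᶠ m in atTop, u ∈ P m) :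
    Tendsto (fun n => μ (K ∩ ⋂ m ≥ n, P m)) atTop (𝓝 (μ K)) := by
  have hmono : Monotone fun n => K ∩ ⋂ m ≥ n, P m := fun n n' hnn' =>
    inter_subset_inter_right _ (biInter_subset_biInter_left fun m hm => le_trans hnn' hm)
  have hunion : (⋃ n, K ∩ ⋂ m ≥ n, P m) = K := by
    refine (iUnion_subset fun n => inter_subset_left).antisymm fun u hu => ?_
    obtain ⟨n, hn⟩ := (hP u hu).exists_forall_of_atTop
    exact mem_iUnion.2 ⟨n, hu, mem_iInter₂.2 hn⟩
  have := tendsto_measure_iUnion_atTop (μ := μ) hmono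
  rwa [hunion] at this

theorem tendstoUniformlyOn_add_sub_of_measurable {h : ℝ → ℝ} (hmeas : Measurable h)
    (hconv : ∀ s, Tendsto (fun x => h (x + s) - h x) atTop (𝓝 0)) :
    TendstoUniformlyOn (fun x s => h (x + s) - h x) 0 atTop (Icc 0 1) := by
  rw [Metric.tendstoUniformlyOn_iff]
  intro δ hδ
  by_contra hfail
  have hbad := frequently_atTop.1 (not_eventually.1 hfail)
  choose x hx hbad using fun n : ℕ => hbad n
  simp only [not_forall, not_lt, Pi.zero_apply, dist_zero_left, Real.norm_eq_abs] at hbad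
  choose s hs hbad using hbad
  have hx_top : Tendsto x atTop atTop :=
    tendsto_atTop_mono hx tendsto_natCast_atTop_atTop
  have hxs_top : Tendsto (fun m => x m + s m) atTop atTop :=
    tendsto_atTop_mono (fun m => le_add_of_nonneg_right (hs m).1) hx_top
  have hsmall (u : ℝ) : ∀ᶠ y in atTop, |h (y + u) - h y| < δ / 2 := by
    simpa [Real.dist_eq] using (hconv u).eventually (Metric.ball_mem_nhds 0 (half_pos hδ))
  set P : ℕ → Set ℝ := fun m =>
    {u | |h (x m + u) - h (x m)| < δ / 2 ∧ |h (x m + s m + u) - h (x m + s m)| < δ / 2}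
  set E : ℕ → Set ℝ := fun n => Icc 0 2 ∩ ⋂ m ≥ n, P m
  have hE_meas (n : ℕ) : MeasurableSet (E n) := by
    refine measurableSet_Icc.inter (.iInter fun m => .iInter fun _ => ?_)
    exact (measurableSet_lt ((hmeas.comp (measurable_const_add _)).sub_const _).abs
      measurable_const).inter
      (measurableSet_lt ((hmeas.comp (measurable_const_add _)).sub_const _).abs measurable_const)
  have hE_vol :
      Tendsto (fun n => 2 * volume (E n)) atTop (𝓝 (2 * volume (Icc (0 : ℝ) 2))) :=
    ENNReal.Tendsto.const_mul (tendsto_measure_inter_iInter_ge volume _ fun u _ =>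
      (hx_top.eventually (hsmall u)).and (hxs_top.eventually (hsmall u))) (Or.inr (by simp))
  obtain ⟨n, hn⟩ := (hE_vol.eventually_const_lt (u := ENNReal.ofReal (2 - 0 + 1))
    (by rw [Real.volume_Icc]; norm_num)).exists
  -- Compare `h (x n)` and `h (x n + s n)` through `h (x n + s n + u)`: `s n + u ∈ E n` and
  -- `u ∈ E n` bound the two increments by `δ / 2`.
  obtain ⟨u, huE, hsuE⟩ := exists_mem_and_add_mem_of_lt_volume (hE_meas n) inter_subset_left
    (hs n) hn
  have h₁ := (mem_iInter₂.1 hsuE.2 n le_rfl).1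
  have h₂ := (mem_iInter₂.1 huE.2 n le_rfl).2
  rw [← add_assoc] at h₁
  have h₃ := hbad n
  rw [abs_lt] at h₁ h₂
  rw [le_abs] at h₃
  rcases h₃ with h₃ | h₃ <;> linarith [h₁.1, h₁.2, h₂.1, h₂.2]

theorem abs_sub_le_of_forall_abs_add_sub_lt {h : ℝ → ℝ} {N δ : ℝ}
    (hN : ∀ x ≥ N, ∀ s ∈ Icc (0 : ℝ) 1, |h (x + s) - h x| < δ) (k : ℕ) :
    ∀ x ≥ N, x < N + k → |h x - h N| ≤ δ * k := by
  induction k with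
  | zero => intro x hx hxk; simp at hxk; linarith
  | succ k ih =>
    intro x hx hxk
    push_cast at hxk ⊢
    rcases lt_or_ge x (N + 1) with hx1 | hx1
    · have := hN N le_rfl (x - N) ⟨by linarith, by linarith⟩
      rw [add_sub_cancel] at this
      have hδ : 0 ≤ δ := (abs_nonneg _).trans this.le
      nlinarith [mul_nonneg hδ (Nat.cast_nonneg k : (0 : ℝ) ≤ k)]
    · have hprev := ih (x - 1) (by linarith) (by linarith)
      have hstep := hN (x - 1) (by linarith) 1 ⟨zero_le_one, le_rfl⟩
      rw [sub_add_cancel] at hstep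
      have := abs_sub_le (h x) (h (x - 1)) (h N)
      linarith

theorem isLittleO_id_of_tendsto_add_sub {h : ℝ → ℝ} (hmeas : Measurable h)
    (hconv : ∀ s, Tendsto (fun x => h (x + s) - h x) atTop (𝓝 0)) :
    h =o[atTop] id := by
  refine isLittleO_iff.2 fun c hc => ?_
  obtain ⟨N, hN⟩ := (Metric.tendstoUniformlyOn_iff.1
    (tendstoUniformlyOn_add_sub_of_measurable hmeas hconv) (c / 2) (half_pos hc)
    ).exists_forall_of_atTop
  simp only [Pi.zero_apply, dist_zero_left, Real.norm_eq_abs] at hN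
  filter_upwards [eventually_ge_atTop N, eventually_ge_atTop (2 * |h N| / c + 1 - N),
    eventually_ge_atTop 0] with x hxN hx hx0
  have hfloor := Nat.lt_floor_add_one (x - N)
  have hbound := abs_sub_le_of_forall_abs_add_sub_lt hN (⌊x - N⌋₊ + 1) x hxN
    (by push_cast; linarith)
  have hfloor' := Nat.floor_le (sub_nonneg.2 hxN)
  push_cast at hbound
  have hdiv : c / 2 * (2 * |h N| / c) = |h N| := by field_simp
  rw [Real.norm_eq_abs, Real.norm_eq_abs, id, abs_of_nonneg hx0]
  have := abs_sub_abs_le_abs_sub (h x) (h N)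
  nlinarith

def IsSlowlyVarying (L : ℝ → ℝ) : Prop :=
  ∀ t > 0, Tendsto (fun u => L (t * u) / L u) atTop (𝓝 1)

namespace IsSlowlyVarying

variable {L : ℝ → ℝ}

theorem eventually_ne_zero (hL : IsSlowlyVarying L) : ∀ᶠ u in atTop, L u ≠ 0 := by
  filter_upwards [(hL 2 two_pos).eventually_ne one_ne_zero] with u hu hLu
  simp [hLu] at hu

theorem of_tendsto_div (hL : IsSlowlyVarying L) {M : ℝ → ℝ}
    (hML : Tendsto (fun u => M u / L u) atTop (𝓝 1)) : IsSlowlyVarying M := by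
  intro t ht
  have htu : Tendsto (fun u => t * u) atTop atTop := tendsto_id.const_mul_atTop ht
  have hlim := ((hML.comp htu).mul (hL t ht)).mul (hML.inv₀ one_ne_zero)
  simp only [mul_one, inv_one] at hlim
  refine hlim.congr' ?_
  filter_upwards [hL.eventually_ne_zero, htu.eventually hL.eventually_ne_zero] with u hLu hLtu
  simp only [Function.comp, inv_div]
  field_simp

theorem tendsto_log_comp_exp_add_sub (hL : IsSlowlyVarying L) (s : ℝ) :
    Tendsto (fun x => Real.log (L (Real.exp (x + s))) - Real.log (L (Real.exp x))) atTop
      (𝓝 0) := by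
  have hlog := ((Real.continuousAt_log one_ne_zero).tendsto.comp
    ((hL (Real.exp s) (Real.exp_pos s)).comp Real.tendsto_exp_atTop))
  rw [Real.log_one] at hlog
  refine hlog.congr' ?_
  filter_upwards [Real.tendsto_exp_atTop.eventually hL.eventually_ne_zero,
    (Real.tendsto_exp_atTop.const_mul_atTop (Real.exp_pos s)).eventually hL.eventually_ne_zero]
    with x hx hsx
  simp only [Function.comp, Real.log_div hsx hx, Real.exp_add, mul_comm]

theorem isLittleO_log (hL : IsSlowlyVarying L) (hmeas : Measurable L) :
    (fun u => Real.log (L u)) =o[atTop] Real.log := by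
  have h := (isLittleO_id_of_tendsto_add_sub (h := fun x => Real.log (L (Real.exp x)))
    (Real.measurable_log.comp (hmeas.comp Real.measurable_exp))
    hL.tendsto_log_comp_exp_add_sub).comp_tendsto Real.tendsto_log_atTop
  refine h.congr' ?_ EventuallyEq.rfl
  filter_upwards [eventually_gt_atTop 0] with u hu
  simp [Real.exp_log hu]

theorem eventually_abs_le_rpow (hL : IsSlowlyVarying L) (hmeas : Measurable L) {ε : ℝ}
    (hε : 0 < ε) : ∀ᶠ u in atTop, |L u| ≤ u ^ ε := by
  filter_upwards [(hL.isLittleO_log hmeas).bound hε, hL.eventually_ne_zero,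
    eventually_gt_atTop 1] with u hu hLu hu1
  have hlog : 0 < Real.log u := Real.log_pos hu1
  rw [Real.norm_eq_abs, Real.norm_eq_abs, abs_of_pos hlog] at hu
  calc |L u| = Real.exp (Real.log (L u)) := by rw [← Real.log_abs, Real.exp_log (abs_pos.2 hLu)]
    _ ≤ Real.exp (ε * Real.log u) := Real.exp_le_exp.2 (le_of_abs_le hu)
    _ = u ^ ε := by rw [Real.rpow_def_of_pos (by linarith), mul_comm]

theorem eventually_abs_le_rpow_mul (hL : IsSlowlyVarying L) {T g : ℝ → ℝ} (hT : Measurable T)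
    (hg : Measurable g) (hg_pos : ∀ᶠ u in atTop, 0 < g u)
    (hTL : Tendsto (fun u => T u / (L u * g u)) atTop (𝓝 1)) {ε : ℝ} (hε : 0 < ε) :
    ∀ᶠ u in atTop, |T u| ≤ u ^ ε * g u := by
  have hM : IsSlowlyVarying fun u => T u / g u :=
    hL.of_tendsto_div (hTL.congr fun u => by rw [div_div, mul_comm])
  filter_upwards [hM.eventually_abs_le_rpow (hT.div hg) hε, hg_pos] with u hu hgu
  calc |T u| = |T u / g u| * g u := by rw [abs_div, abs_of_pos hgu, div_mul_cancel₀ _ hgu.ne']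
    _ ≤ u ^ ε * g u := mul_le_mul_of_nonneg_right hu hgu.le

theorem isBigO_comp_mul_of_tendsto_div (hL : IsSlowlyVarying L) {T : ℝ → ℝ}
    (hT : Measurable T) {α p c ε : ℝ} (hp : 0 < p) (hc : 0 < c) (hε : 0 < ε)
    (hTL : Tendsto (fun u => T u / (L u * u ^ α * Real.exp (-u ^ 2 / (2 * p ^ 2)))) atTop
      (𝓝 1)) :
    (fun x => T (c * p * x)) =O[atTop] fun x => x ^ (α + ε) * Real.exp (-c ^ 2 * x ^ 2 / 2) := by
  have hcp : 0 < c * p := mul_pos hc hp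
  have hbound := hL.eventually_abs_le_rpow_mul
    (g := fun u => u ^ α * Real.exp (-u ^ 2 / (2 * p ^ 2))) hT (by fun_prop)
    ((eventually_gt_atTop 0).mono fun u hu => by positivity)
    (hTL.congr fun u => by rw [mul_assoc]) hε
  refine IsBigO.of_bound ((c * p) ^ (α + ε)) ?_
  filter_upwards [(tendsto_id.const_mul_atTop hcp).eventually hbound, eventually_gt_atTop 0]
    with x hx hx0
  have hexp : -(c * p * x) ^ 2 / (2 * p ^ 2) = -c ^ 2 * x ^ 2 / 2 := by field_simp
  rw [Real.norm_eq_abs, Real.norm_of_nonneg (by positivity)]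
  calc |T (c * p * x)|
      ≤ (c * p * x) ^ ε * ((c * p * x) ^ α * Real.exp (-(c * p * x) ^ 2 / (2 * p ^ 2))) := hx
    _ = (c * p) ^ (α + ε) * (x ^ (α + ε) * Real.exp (-c ^ 2 * x ^ 2 / 2)) := by
      rw [hexp, ← mul_assoc, ← Real.rpow_add (by positivity), Real.mul_rpow hcp.le hx0.le,
        add_comm ε α]
      ring

end IsSlowlyVarying

theorem isBigO_measureReal_of_subset {Ω : Type*} [MeasurableSpace Ω] {μ : Measure Ω}
    [IsFiniteMeasure μ] {A B : ℝ → Set Ω} (hAB : ∀ x, A x ⊆ B x) :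
    (fun x => (μ (A x)).toReal) =O[atTop] fun x => (μ (B x)).toReal :=
  isBigO_of_le _ fun x => by
    simp only [Real.norm_eq_abs, abs_of_nonneg ENNReal.toReal_nonneg]
    exact measureReal_mono (hAB x)

theorem isBigO_measure_gt_of_tendsto_div {Ω : Type*} [MeasurableSpace Ω] (μ : Measure Ω)
    [IsFiniteMeasure μ] {X : Ω → ℝ} {L : ℝ → ℝ} (hL : IsSlowlyVarying L)
    {α p c ε : ℝ} (hp : 0 < p) (hc : 0 < c) (hε : 0 < ε)
    (htail : Tendsto (fun u : ℝ => (μ {ω | X ω > u}).toReal /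
        (L u * u ^ α * Real.exp (-u ^ 2 / (2 * p ^ 2)))) atTop (𝓝 1)) :
    (fun x : ℝ => (μ {ω | X ω > c * p * x}).toReal) =O[atTop]
      fun x => x ^ (α + ε) * Real.exp (-c ^ 2 * x ^ 2 / 2) := by
  have hanti : Antitone fun u : ℝ => (μ {ω | X ω > u}).toReal := fun u v huv =>
    measureReal_mono fun ω (hω : v < X ω) => huv.trans_lt hω
  exact hL.isBigO_comp_mul_of_tendsto_div hanti.measurable hp hc hε htail

theorem lemma86_boundary_bounds_general {Ω : Type*} [MeasurableSpace Ω] (μ : Measure Ω)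
    [IsProbabilityMeasure μ] (X₁ X₂ : Ω → ℝ)
    (L₁ L₂ : ℝ → ℝ) (α₁ α₂ p₁ p₂ : ℝ) (hp₁ : 0 < p₁) (hp₂ : 0 < p₂)
    (hsv₁ : ∀ t > 0, Tendsto (fun u => L₁ (t * u) / L₁ u) atTop (𝓝 1))
    (hsv₂ : ∀ t > 0, Tendsto (fun u => L₂ (t * u) / L₂ u) atTop (𝓝 1))
    (htail₁ : Tendsto (fun u : ℝ => (μ {ω | X₁ ω > u}).toReal /
        (L₁ u * u ^ α₁ * Real.exp (-u ^ 2 / (2 * p₁ ^ 2)))) atTop (𝓝 1))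
    (htail₂ : Tendsto (fun u : ℝ => (μ {ω | X₂ ω > u}).toReal /
        (L₂ u * u ^ α₂ * Real.exp (-u ^ 2 / (2 * p₂ ^ 2)))) atTop (𝓝 1)) :
    ∀ ε > 0,
      (fun x : ℝ => (μ {ω | X₁ ω + X₂ ω > x ∧ X₂ ω ≤ (1 - 1.1 * p₁) * x}).toReal)
        =O[atTop] (fun x : ℝ => x ^ (α₁ + ε) * Real.exp (-(1.1 : ℝ) ^ 2 * x ^ 2 / 2)) ∧
      (fun x : ℝ => (μ {ω | X₁ ω + X₂ ω > x ∧ X₂ ω > 1.1 * p₂ * x}).toReal)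
        =O[atTop] (fun x : ℝ => x ^ (α₂ + ε) * Real.exp (-(1.1 : ℝ) ^ 2 * x ^ 2 / 2)) := by
  intro ε hε
  have hc : (0 : ℝ) < 1.1 := by norm_num
  refine ⟨(isBigO_measureReal_of_subset fun x => ?_).trans
      (isBigO_measure_gt_of_tendsto_div μ hsv₁ hp₁ hc hε htail₁),
    (isBigO_measureReal_of_subset fun x => ?_).trans
      (isBigO_measure_gt_of_tendsto_div μ hsv₂ hp₂ hc hε htail₂)⟩
  · rintro ω ⟨hsum, hX₂⟩
    change 1.1 * p₁ * x < X₁ ω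
    linarith
  · exact fun ω hω => hω.2

/-- The two boundary-region bounds in the proof of Lemma 8.6: with c = 1.1,
P(X₁+X₂ > x, X₂ ≤ (1−cp₁)x) = O(x^{α₁+ε} e^{−c²x²/2}) and
P(X₁+X₂ > x, X₂ > cp₂x) = O(x^{α₂+ε} e^{−c²x²/2}). -/
theorem lemma86_boundary_bounds {Ω : Type*} [MeasurableSpace Ω] (μ : Measure Ω)
    [IsProbabilityMeasure μ] (X₁ X₂ : Ω → ℝ)
    (hm₁ : Measurable X₁) (hm₂ : Measurable X₂)
    (hind : IndepFun X₁ X₂ μ)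
    (L₁ L₂ : ℝ → ℝ) (α₁ α₂ p₁ p₂ : ℝ) (hp₁ : 0 < p₁) (hp₂ : 0 < p₂)
    (hp12 : p₁ ≤ p₂) (hpsum : p₁ ^ 2 + p₂ ^ 2 = 1)
    (hL₁pos : ∀ u > 0, 0 < L₁ u) (hL₂pos : ∀ u > 0, 0 < L₂ u)
    (hsv₁ : ∀ t > 0, Tendsto (fun u => L₁ (t * u) / L₁ u) atTop (𝓝 1))
    (hsv₂ : ∀ t > 0, Tendsto (fun u => L₂ (t * u) / L₂ u) atTop (𝓝 1))
    (htail₁ : Tendsto (fun u : ℝ => (μ {ω | X₁ ω > u}).toReal /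
        (L₁ u * u ^ α₁ * Real.exp (-u ^ 2 / (2 * p₁ ^ 2)))) atTop (𝓝 1))
    (htail₂ : Tendsto (fun u : ℝ => (μ {ω | X₂ ω > u}).toReal /
        (L₂ u * u ^ α₂ * Real.exp (-u ^ 2 / (2 * p₂ ^ 2)))) atTop (𝓝 1)) :
    ∀ ε > 0,
      (fun x : ℝ => (μ {ω | X₁ ω + X₂ ω > x ∧ X₂ ω ≤ (1 - 1.1 * p₁) * x}).toReal)
        =O[atTop] (fun x : ℝ => x ^ (α₁ + ε) * Real.exp (-(1.1 : ℝ) ^ 2 * x ^ 2 / 2)) ∧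
      (fun x : ℝ => (μ {ω | X₁ ω + X₂ ω > x ∧ X₂ ω > 1.1 * p₂ * x}).toReal)
        =O[atTop] (fun x : ℝ => x ^ (α₂ + ε) * Real.exp (-(1.1 : ℝ) ^ 2 * x ^ 2 / 2)) :=
  lemma86_boundary_bounds_general μ X₁ X₂ L₁ L₂ α₁ α₂ p₁ p₂ hp₁ hp₂ hsv₁ hsv₂ htail₁ htail₂
end
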